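/- arXiv:2411.19826 — 4 statements merged into one kernel-verified Lean document; each statement's English description precedes it below -/
import Mathlib

section
/- Let K be a planar convex body and t a real angle. Then the right limits satisfy lim_{s→t⁺} v_K^+(s) = lim_{s→t⁺} v_K^−(s) = lim_{s→t⁺} v_K(t,s) = v_K^+(t), and the left limits satisfy lim_{s→t⁻} v_K^+(s) = lim_{s→t⁻} v_K^−(s) = lim_{s→t⁻} v_K(s,t) = v_K^−(t). In particular, the map t ↦ v_K^+(t) is right-continuous. -/
noncomputable section

open Real MeasureTheory Set Filter Topology

abbrev Pt := EuclideanSpace ℝ (Fin 2)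

def mk2 (x y : ℝ) : Pt := (WithLp.equiv 2 (Fin 2 → ℝ)).symm ![x, y]

def dotp (p q : Pt) : ℝ := p 0 * q 0 + p 1 * q 1

def uvec (t : ℝ) : Pt := mk2 (Real.cos t) (Real.sin t)

def vvec (t : ℝ) : Pt := mk2 (-Real.sin t) (Real.cos t)

def suppFn (K : Set Pt) (t : ℝ) : ℝ := sSup ((fun p => dotp p (uvec t)) '' K)

def suppLine (K : Set Pt) (t : ℝ) : Set Pt := {p | dotp p (uvec t) = suppFn K t}

def edge (K : Set Pt) (t : ℝ) : Set Pt := K ∩ suppLine K t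

def vplus (K : Set Pt) (t : ℝ) : Pt :=
  suppFn K t • uvec t + sSup ((fun p => dotp p (vvec t)) '' edge K t) • vvec t

def vminus (K : Set Pt) (t : ℝ) : Pt :=
  suppFn K t • uvec t + sInf ((fun p => dotp p (vvec t)) '' edge K t) • vvec t

def vinter (K : Set Pt) (a b : ℝ) : Pt :=
  mk2 ((suppFn K a * Real.sin b - suppFn K b * Real.sin a) / Real.sin (b - a))
      ((suppFn K b * Real.cos a - suppFn K a * Real.cos b) / Real.sin (b - a))

def IsConvexBody (K : Set Pt) : Prop := K.Nonempty ∧ IsCompact K ∧ Convex ℝ K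

def Jset (ω : ℝ) : Set ℝ := Icc 0 ω ∪ Icc (π/2) (ω + π/2)

def IsCap (ω : ℝ) (K : Set Pt) : Prop :=
  IsConvexBody K ∧
  suppFn K ω = 1 ∧ suppFn K (π/2) = 1 ∧
  suppFn K (ω + π) = 0 ∧ suppFn K (3*π/2) = 0 ∧
  K = ⋂ t ∈ Jset ω ∪ {ω + π, 3*π/2}, {p : Pt | dotp p (uvec t) ≤ suppFn K t}

def polyAngles (ω : ℝ) (Θ : Finset ℝ) : Set ℝ :=
  ↑Θ ∪ (fun s => s + π/2) '' ↑Θ ∪ {ω, π/2, ω + π, 3*π/2}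

def IsPolyCap (ω : ℝ) (Θ : Finset ℝ) (K : Set Pt) : Prop :=
  IsCap ω K ∧ K = ⋂ t ∈ polyAngles ω Θ, {p : Pt | dotp p (uvec t) ≤ suppFn K t}

def Qminus (K : Set Pt) (t : ℝ) : Set Pt :=
  {p | dotp p (uvec t) < suppFn K t - 1 ∧ dotp p (uvec (t + π/2)) < suppFn K (t + π/2) - 1}

def Qplus (K : Set Pt) (t : ℝ) : Set Pt :=
  {p | dotp p (uvec t) ≤ suppFn K t ∧ dotp p (uvec (t + π/2)) ≤ suppFn K (t + π/2)}

def hallway (S : Set Pt) (t : ℝ) : Set Pt := Qplus S t \ Qminus S t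

def fan (ω : ℝ) : Set Pt := {p | 0 ≤ dotp p (uvec ω) ∧ 0 ≤ dotp p (uvec (π/2))}

def parall (ω : ℝ) : Set Pt :=
  {p | dotp p (uvec (π/2)) ∈ Icc (0:ℝ) 1 ∧ dotp p (uvec ω) ∈ Icc (0:ℝ) 1}

def innerCorner (K : Set Pt) (t : ℝ) : Pt :=
  (suppFn K t - 1) • uvec t + (suppFn K (t + π/2) - 1) • vvec t

def outerCorner (K : Set Pt) (t : ℝ) : Pt :=
  suppFn K t • uvec t + suppFn K (t + π/2) • vvec t

def wedge (ω : ℝ) (K : Set Pt) (t : ℝ) : Set Pt := fan ω ∩ Qminus K t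

def niche (ω : ℝ) (K : Set Pt) : Set Pt := fan ω ∩ ⋃ t ∈ Ioo 0 ω, Qminus K t

def polyNiche (ω : ℝ) (Θ : Finset ℝ) (K : Set Pt) : Set Pt :=
  parall ω ∩ ⋃ t ∈ Θ, Qminus K t

def upperBoundary (ω : ℝ) (K : Set Pt) : Set Pt := ⋃ t ∈ Icc 0 (ω + π/2), edge K t

def area (X : Set Pt) : ℝ := (volume X).toReal

def Wpt (K : Set Pt) (t : ℝ) : Pt := mk2 ((suppFn K t - 1) / Real.cos t) 0

def Zpt (ω : ℝ) (K : Set Pt) (t : ℝ) : Pt :=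
  ((suppFn K (t + π/2) - 1) / Real.sin (t + π/2 - ω)) • vvec ω

def wgap (K : Set Pt) (t : ℝ) : ℝ := dotp (vminus K 0 - Wpt K t) (uvec 0)

def zgap (ω : ℝ) (K : Set Pt) (t : ℝ) : ℝ := dotp (vplus K (ω + π/2) - Zpt ω K t) (vvec ω)

def wgapInf (ω : ℝ) (K : Set Pt) : ℝ := sInf (wgap K '' Ioo 0 ω)

def zgapInf (ω : ℝ) (K : Set Pt) : ℝ := sInf (zgap ω K '' Ioo 0 ω)

def fplus (K : Set Pt) (t : ℝ) : ℝ := dotp (outerCorner K t - vplus K t) (vvec t)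
def fminus (K : Set Pt) (t : ℝ) : ℝ := dotp (outerCorner K t - vminus K t) (vvec t)
def gplus (K : Set Pt) (t : ℝ) : ℝ := dotp (outerCorner K t - vplus K (t + π/2)) (uvec t)
def gminus (K : Set Pt) (t : ℝ) : ℝ := dotp (outerCorner K t - vminus K (t + π/2)) (uvec t)

def oPt (ω : ℝ) : Pt := mk2 (Real.tan (π/4 - ω/2)) 1

def hplane (c : Bool) (t h : ℝ) : Set Pt :=
  if c then {p | dotp p (uvec t) ≤ h} else {p | dotp p (uvec t) < h}

section Aux
variable {K : Set Pt}

lemma expand_pt (t : ℝ) (p : Pt) : p = dotp p (uvec t) • uvec t + dotp p (vvec t) • vvec t := by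
  ext i
  fin_cases i
  · simp [dotp, uvec, vvec, mk2, PiLp.add_apply, PiLp.smul_apply]
    linear_combination (-(p 0)) * (Real.sin_sq_add_cos_sq t)
  · simp [dotp, uvec, vvec, mk2, PiLp.add_apply, PiLp.smul_apply]
    linear_combination (-(p 1)) * (Real.sin_sq_add_cos_sq t)

lemma dotp_rot (t s : ℝ) (p : Pt) :
    dotp p (uvec s) = Real.cos (s - t) * dotp p (uvec t) + Real.sin (s - t) * dotp p (vvec t) := by
  simp only [dotp, uvec, vvec, mk2, Real.cos_sub, Real.sin_sub]
  simp
  linear_combination (-(p 0 * Real.cos s + p 1 * Real.sin s)) * (Real.sin_sq_add_cos_sq t)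

lemma cont_dotp (w : Pt) : Continuous fun p : Pt => dotp p w := by
  have h0 : Continuous fun p : Pt => p 0 := (EuclideanSpace.proj (0 : Fin 2)).continuous
  have h1 : Continuous fun p : Pt => p 1 := (EuclideanSpace.proj (1 : Fin 2)).continuous
  exact (h0.mul continuous_const).add (h1.mul continuous_const)

lemma le_suppFn (hc : IsCompact K) {p : Pt} (hp : p ∈ K) (t : ℝ) :
    dotp p (uvec t) ≤ suppFn K t :=
  le_csSup (hc.image (cont_dotp (uvec t))).bddAbove ⟨p, hp, rfl⟩

lemma suppFn_attained (hne : K.Nonempty) (hc : IsCompact K) (t : ℝ) :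
    ∃ q ∈ K, dotp q (uvec t) = suppFn K t := by
  obtain ⟨q, hq, hq2⟩ := (hc.image (cont_dotp (uvec t))).sSup_mem (hne.image _)
  exact ⟨q, hq, hq2⟩

lemma edge_compact (hc : IsCompact K) (t : ℝ) : IsCompact (edge K t) :=
  hc.inter_right (isClosed_eq (cont_dotp _) continuous_const)

lemma edge_nonempty (hne : K.Nonempty) (hc : IsCompact K) (t : ℝ) : (edge K t).Nonempty := by
  obtain ⟨q, hq, hq2⟩ := suppFn_attained hne hc t
  exact ⟨q, hq, hq2⟩

lemma dot_le_Mp (hc : IsCompact K) {t : ℝ} {q : Pt} (hq : q ∈ edge K t) :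
    dotp q (vvec t) ≤ sSup ((fun p => dotp p (vvec t)) '' edge K t) :=
  le_csSup ((edge_compact hc t).image (cont_dotp _)).bddAbove ⟨q, hq, rfl⟩

lemma Mm_le_dot (hc : IsCompact K) {t : ℝ} {q : Pt} (hq : q ∈ edge K t) :
    sInf ((fun p => dotp p (vvec t)) '' edge K t) ≤ dotp q (vvec t) :=
  csInf_le ((edge_compact hc t).image (cont_dotp _)).bddBelow ⟨q, hq, rfl⟩

lemma vplus_spec (hne : K.Nonempty) (hc : IsCompact K) (t : ℝ) :
    vplus K t ∈ edge K t ∧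
      dotp (vplus K t) (vvec t) = sSup ((fun p => dotp p (vvec t)) '' edge K t) := by
  obtain ⟨q, hq, hqv⟩ :=
    ((edge_compact hc t).image (cont_dotp (vvec t))).sSup_mem
      ((edge_nonempty hne hc t).image _)
  have hqu : dotp q (uvec t) = suppFn K t := hq.2
  have hv : vplus K t = q := by
    rw [vplus, ← hqu, ← hqv]; exact (expand_pt t q).symm
  rw [hv]; exact ⟨hq, hqv⟩

lemma vminus_spec (hne : K.Nonempty) (hc : IsCompact K) (t : ℝ) :
    vminus K t ∈ edge K t ∧
      dotp (vminus K t) (vvec t) = sInf ((fun p => dotp p (vvec t)) '' edge K t) := by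
  obtain ⟨q, hq, hqv⟩ :=
    ((edge_compact hc t).image (cont_dotp (vvec t))).sInf_mem
      ((edge_nonempty hne hc t).image _)
  have hqu : dotp q (uvec t) = suppFn K t := hq.2
  have hv : vminus K t = q := by
    rw [vminus, ← hqu, ← hqv]; exact (expand_pt t q).symm
  rw [hv]; exact ⟨hq, hqv⟩

lemma dotp_vplus_u (hne : K.Nonempty) (hc : IsCompact K) (t : ℝ) :
    dotp (vplus K t) (uvec t) = suppFn K t := (vplus_spec hne hc t).1.2

lemma dotp_vminus_u (hne : K.Nonempty) (hc : IsCompact K) (t : ℝ) :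
    dotp (vminus K t) (uvec t) = suppFn K t := (vminus_spec hne hc t).1.2

end Aux
section Aux2
variable {K : Set Pt}

lemma exists_coord_bound (hc : IsCompact K) :
    ∃ R : ℝ, 0 ≤ R ∧ ∀ p ∈ K, |p 0| ≤ R ∧ |p 1| ≤ R := by
  obtain ⟨C, hC⟩ := hc.isBounded.exists_norm_le
  refine ⟨max C 0, le_max_right _ _, fun p hp => ?_⟩
  have hn := hC p hp
  have hnorm : ‖p‖ = Real.sqrt (p 0 ^ 2 + p 1 ^ 2) := by
    rw [EuclideanSpace.norm_eq, Fin.sum_univ_two]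
    norm_num [sq_abs]
  have h0 : |p 0| ≤ ‖p‖ := by
    rw [hnorm, ← Real.sqrt_sq_eq_abs]
    exact Real.sqrt_le_sqrt (by nlinarith [sq_nonneg (p 1)])
  have h1 : |p 1| ≤ ‖p‖ := by
    rw [hnorm, ← Real.sqrt_sq_eq_abs]
    exact Real.sqrt_le_sqrt (by nlinarith [sq_nonneg (p 0)])
  exact ⟨h0.trans (hn.trans (le_max_left _ _)), h1.trans (hn.trans (le_max_left _ _))⟩

lemma dotp_uvec_diff (s t : ℝ) (p : Pt) :
    dotp p (uvec s) = dotp p (uvec t) + (p 0 * (Real.cos s - Real.cos t) + p 1 * (Real.sin s - Real.sin t)) := by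
  simp [dotp, uvec, mk2]; ring

lemma suppFn_sub_le (hne : K.Nonempty) (hc : IsCompact K) {R : ℝ}
    (hR : ∀ p ∈ K, |p 0| ≤ R ∧ |p 1| ≤ R) (s t : ℝ) :
    suppFn K s ≤ suppFn K t + R * (|Real.cos s - Real.cos t| + |Real.sin s - Real.sin t|) := by
  obtain ⟨q, hq, hqs⟩ := suppFn_attained hne hc s
  have h1 : q 0 * (Real.cos s - Real.cos t) ≤ R * |Real.cos s - Real.cos t| := by
    calc q 0 * (Real.cos s - Real.cos t) ≤ |q 0 * (Real.cos s - Real.cos t)| := le_abs_self _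
    _ = |q 0| * |Real.cos s - Real.cos t| := abs_mul _ _
    _ ≤ R * |Real.cos s - Real.cos t| := by
        exact mul_le_mul_of_nonneg_right (hR q hq).1 (abs_nonneg _)
  have h2 : q 1 * (Real.sin s - Real.sin t) ≤ R * |Real.sin s - Real.sin t| := by
    calc q 1 * (Real.sin s - Real.sin t) ≤ |q 1 * (Real.sin s - Real.sin t)| := le_abs_self _
    _ = |q 1| * |Real.sin s - Real.sin t| := abs_mul _ _
    _ ≤ R * |Real.sin s - Real.sin t| := by
        exact mul_le_mul_of_nonneg_right (hR q hq).2 (abs_nonneg _)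
  have h3 := le_suppFn hc hq t
  have h4 := dotp_uvec_diff s t q
  nlinarith [h1, h2, h3, h4, hqs]

lemma suppFn_tendsto (hne : K.Nonempty) (hc : IsCompact K) (t : ℝ) :
    Tendsto (suppFn K) (𝓝 t) (𝓝 (suppFn K t)) := by
  obtain ⟨R, hR0, hR⟩ := exists_coord_bound hc
  have hgc : Continuous (fun s => R * (|Real.cos s - Real.cos t| + |Real.sin s - Real.sin t|)) := by
    apply continuous_const.mul
    exact ((Real.continuous_cos.sub continuous_const).abs.add
      ((Real.continuous_sin.sub continuous_const).abs))
  have hg0 : Tendsto (fun s => R * (|Real.cos s - Real.cos t| + |Real.sin s - Real.sin t|)) (𝓝 t) (𝓝 0) := by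
    have := hgc.tendsto t
    simpa using this
  have hbound : ∀ s, ‖suppFn K s - suppFn K t‖ ≤ R * (|Real.cos s - Real.cos t| + |Real.sin s - Real.sin t|) := by
    intro s
    have e1 := suppFn_sub_le hne hc hR s t
    have e2 := suppFn_sub_le hne hc hR t s
    rw [Real.norm_eq_abs, abs_sub_le_iff]
    constructor
    · linarith
    · have : |Real.cos t - Real.cos s| = |Real.cos s - Real.cos t| := abs_sub_comm _ _
      have h2 : |Real.sin t - Real.sin s| = |Real.sin s - Real.sin t| := abs_sub_comm _ _
      rw [this, h2] at e2
      linarith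
  have := squeeze_zero_norm hbound hg0
  have h2 := this.add (tendsto_const_nhds (x := suppFn K t))
  simpa using h2

end Aux2
section Aux3
variable {K : Set Pt}

lemma eventually_slice_lt (hne : K.Nonempty) (hc : IsCompact K) (t : ℝ) {ε : ℝ} (hε : 0 < ε)
    {l : Filter ℝ} {p : ℝ → Pt}
    (hmem : ∀ᶠ s in l, p s ∈ K)
    (ha : Tendsto (fun s => dotp (p s) (uvec t)) l (𝓝 (suppFn K t))) :
    ∀ᶠ s in l, dotp (p s) (vvec t) < dotp (vplus K t) (vvec t) + ε := by
  set M : ℝ := dotp (vplus K t) (vvec t) with hM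
  set S : Set Pt := K ∩ {q | M + ε ≤ dotp q (vvec t)} with hS
  by_cases hSne : S.Nonempty
  · have hScomp : IsCompact S := hc.inter_right (isClosed_le continuous_const (cont_dotp _))
    obtain ⟨q0, hq0S, hq0v⟩ :=
      (hScomp.image (cont_dotp (uvec t))).sSup_mem (hSne.image _)
    set h0 : ℝ := sSup ((fun q => dotp q (uvec t)) '' S) with hh0
    have hq0K : q0 ∈ K := hq0S.1
    have hlt : h0 < suppFn K t := by
      rcases lt_or_eq_of_le (le_suppFn hc hq0K t) with h | h
      · exact hq0v.symm.trans_lt h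
      · exfalso
        have hedge : q0 ∈ edge K t := ⟨hq0K, h⟩
        have := dot_le_Mp hc hedge
        rw [← (vplus_spec hne hc t).2] at this
        have := hq0S.2
        simp only [mem_setOf_eq] at this
        linarith
    have hev : ∀ᶠ s in l, h0 < dotp (p s) (uvec t) := ha.eventually (eventually_gt_nhds hlt)
    filter_upwards [hmem, hev] with s hs1 hs2
    by_contra hcon
    push_neg at hcon
    have hpsS : p s ∈ S := ⟨hs1, hcon⟩
    have : dotp (p s) (uvec t) ≤ h0 :=
      le_csSup (hScomp.image (cont_dotp (uvec t))).bddAbove ⟨p s, hpsS, rfl⟩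
    linarith
  · filter_upwards [hmem] with s hs
    by_contra hcon
    push_neg at hcon
    exact hSne ⟨p s, hs, hcon⟩

lemma eventually_slice_gt (hne : K.Nonempty) (hc : IsCompact K) (t : ℝ) {ε : ℝ} (hε : 0 < ε)
    {l : Filter ℝ} {p : ℝ → Pt}
    (hmem : ∀ᶠ s in l, p s ∈ K)
    (ha : Tendsto (fun s => dotp (p s) (uvec t)) l (𝓝 (suppFn K t))) :
    ∀ᶠ s in l, dotp (vminus K t) (vvec t) - ε < dotp (p s) (vvec t) := by
  set M : ℝ := dotp (vminus K t) (vvec t) with hM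
  set S : Set Pt := K ∩ {q | dotp q (vvec t) ≤ M - ε} with hS
  by_cases hSne : S.Nonempty
  · have hScomp : IsCompact S := hc.inter_right (isClosed_le (cont_dotp _) continuous_const)
    obtain ⟨q0, hq0S, hq0v⟩ :=
      (hScomp.image (cont_dotp (uvec t))).sSup_mem (hSne.image _)
    set h0 : ℝ := sSup ((fun q => dotp q (uvec t)) '' S) with hh0
    have hq0K : q0 ∈ K := hq0S.1
    have hlt : h0 < suppFn K t := by
      rcases lt_or_eq_of_le (le_suppFn hc hq0K t) with h | h
      · exact hq0v.symm.trans_lt h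
      · exfalso
        have hedge : q0 ∈ edge K t := ⟨hq0K, h⟩
        have := Mm_le_dot hc hedge
        rw [← (vminus_spec hne hc t).2] at this
        have h2 := hq0S.2
        simp only [mem_setOf_eq] at h2
        linarith
    have hev : ∀ᶠ s in l, h0 < dotp (p s) (uvec t) := ha.eventually (eventually_gt_nhds hlt)
    filter_upwards [hmem, hev] with s hs1 hs2
    by_contra hcon
    push_neg at hcon
    have hpsS : p s ∈ S := ⟨hs1, hcon⟩
    have : dotp (p s) (uvec t) ≤ h0 :=
      le_csSup (hScomp.image (cont_dotp (uvec t))).bddAbove ⟨p s, hpsS, rfl⟩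
    linarith
  · filter_upwards [hmem] with s hs
    by_contra hcon
    push_neg at hcon
    exact hSne ⟨p s, hs, hcon⟩

end Aux3
section Aux4
variable {K : Set Pt}

lemma dotp_diff_bound {R : ℝ} {q : Pt} (h0 : |q 0| ≤ R) (h1 : |q 1| ≤ R) (s t : ℝ) :
    |dotp q (uvec s) - dotp q (uvec t)| ≤ R * (|Real.cos s - Real.cos t| + |Real.sin s - Real.sin t|) := by
  have e : dotp q (uvec s) - dotp q (uvec t)
      = q 0 * (Real.cos s - Real.cos t) + q 1 * (Real.sin s - Real.sin t) := by
    simp [dotp, uvec, mk2]; ring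
  rw [e]
  calc |q 0 * (Real.cos s - Real.cos t) + q 1 * (Real.sin s - Real.sin t)|
      ≤ |q 0 * (Real.cos s - Real.cos t)| + |q 1 * (Real.sin s - Real.sin t)| := abs_add_le _ _
    _ = |q 0| * |Real.cos s - Real.cos t| + |q 1| * |Real.sin s - Real.sin t| := by
        rw [abs_mul, abs_mul]
    _ ≤ R * |Real.cos s - Real.cos t| + R * |Real.sin s - Real.sin t| := by
        gcongr
    _ = R * (|Real.cos s - Real.cos t| + |Real.sin s - Real.sin t|) := by ring

lemma tendsto_dotp_u (hne : K.Nonempty) (hc : IsCompact K) (t : ℝ) {l : Filter ℝ}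
    (hl : l ≤ 𝓝 t) {p : ℝ → Pt}
    (hmem : ∀ᶠ s in l, p s ∈ K)
    (hsupp : ∀ᶠ s in l, dotp (p s) (uvec s) = suppFn K s) :
    Tendsto (fun s => dotp (p s) (uvec t)) l (𝓝 (suppFn K t)) := by
  obtain ⟨R, hR0, hR⟩ := exists_coord_bound hc
  have hgl : Tendsto (fun s => suppFn K s - R * (|Real.cos s - Real.cos t| + |Real.sin s - Real.sin t|)) l
      (𝓝 (suppFn K t)) := by
    have hgc : Tendsto (fun s => R * (|Real.cos s - Real.cos t| + |Real.sin s - Real.sin t|)) (𝓝 t) (𝓝 0) := by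
      have : Continuous (fun s => R * (|Real.cos s - Real.cos t| + |Real.sin s - Real.sin t|)) :=
        continuous_const.mul (((Real.continuous_cos.sub continuous_const).abs).add
          ((Real.continuous_sin.sub continuous_const).abs))
      simpa using this.tendsto t
    have := (suppFn_tendsto hne hc t).sub hgc
    simpa using this.mono_left hl
  refine tendsto_of_tendsto_of_tendsto_of_le_of_le' hgl tendsto_const_nhds ?_ ?_
  · filter_upwards [hmem, hsupp] with s hs hsup
    have hb := dotp_diff_bound (hR (p s) hs).1 (hR (p s) hs).2 s t
    have h2 := (abs_le.mp hb).2
    rw [hsup] at h2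
    linarith
  · filter_upwards [hmem] with s hs
    exact le_suppFn hc hs t

lemma tendsto_right_edge (hne : K.Nonempty) (hc : IsCompact K) (t : ℝ) {p : ℝ → Pt}
    (hp : ∀ s ∈ Ioo t (t + π/2), p s ∈ edge K s) :
    Tendsto p (𝓝[>] t) (𝓝 (vplus K t)) := by
  have hIoo : Ioo t (t + π/2) ∈ 𝓝[>] t :=
    Ioo_mem_nhdsGT_of_mem ⟨le_refl t, by linarith [Real.pi_pos]⟩
  have hev : ∀ᶠ s in 𝓝[>] t, p s ∈ edge K s := by
    filter_upwards [hIoo] with s hs; exact hp s hs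
  have hmemK : ∀ᶠ s in 𝓝[>] t, p s ∈ K := by filter_upwards [hev] with s hs; exact hs.1
  have hsupp : ∀ᶠ s in 𝓝[>] t, dotp (p s) (uvec s) = suppFn K s := by
    filter_upwards [hev] with s hs; exact hs.2
  have ha : Tendsto (fun s => dotp (p s) (uvec t)) (𝓝[>] t) (𝓝 (suppFn K t)) :=
    tendsto_dotp_u hne hc t nhdsWithin_le_nhds hmemK hsupp
  set M : ℝ := dotp (vplus K t) (vvec t) with hM
  have hlow : ∀ᶠ s in 𝓝[>] t, M ≤ dotp (p s) (vvec t) := by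
    filter_upwards [hIoo, hev, hmemK] with s hs hse hsK
    have hsin : 0 < Real.sin (s - t) :=
      Real.sin_pos_of_pos_of_lt_pi (by linarith [hs.1]) (by linarith [hs.2, Real.pi_pos])
    have hcos : 0 ≤ Real.cos (s - t) :=
      Real.cos_nonneg_of_mem_Icc ⟨by linarith [hs.1, Real.pi_pos], by linarith [hs.2]⟩
    have e1 := dotp_rot t s (p s)
    have e2 := dotp_rot t s (vplus K t)
    rw [dotp_vplus_u hne hc t, ← hM] at e2
    have i1 : dotp (vplus K t) (uvec s) ≤ suppFn K s :=
      le_suppFn hc (vplus_spec hne hc t).1.1 s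
    have i2 : dotp (p s) (uvec t) ≤ suppFn K t := le_suppFn hc hsK t
    have i3 : dotp (p s) (uvec s) = suppFn K s := hse.2
    have i4 : Real.cos (s - t) * dotp (p s) (uvec t) ≤ Real.cos (s - t) * suppFn K t :=
      mul_le_mul_of_nonneg_left i2 hcos
    have key : Real.sin (s - t) * M ≤ Real.sin (s - t) * dotp (p s) (vvec t) := by
      nlinarith [e1, e2, i1, i3, i4]
    exact (mul_le_mul_iff_right₀ hsin).mp key
  have hb : Tendsto (fun s => dotp (p s) (vvec t)) (𝓝[>] t) (𝓝 M) := by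
    rw [Metric.tendsto_nhds]
    intro ε hε
    filter_upwards [eventually_slice_lt hne hc t hε hmemK ha, hlow] with s h1 h2
    rw [Real.dist_eq, abs_lt]
    constructor <;> [linarith; linarith]
  have hfin : Tendsto (fun s => dotp (p s) (uvec t) • uvec t + dotp (p s) (vvec t) • vvec t)
      (𝓝[>] t) (𝓝 (suppFn K t • uvec t + M • vvec t)) :=
    (ha.smul_const _).add (hb.smul_const _)
  have hvp : vplus K t = suppFn K t • uvec t + M • vvec t := by
    conv_lhs => rw [expand_pt t (vplus K t)]
    rw [dotp_vplus_u hne hc t]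
  rw [hvp]
  exact hfin.congr fun s => (expand_pt t (p s)).symm

lemma tendsto_left_edge (hne : K.Nonempty) (hc : IsCompact K) (t : ℝ) {p : ℝ → Pt}
    (hp : ∀ s ∈ Ioo (t - π/2) t, p s ∈ edge K s) :
    Tendsto p (𝓝[<] t) (𝓝 (vminus K t)) := by
  have hIoo : Ioo (t - π/2) t ∈ 𝓝[<] t :=
    Ioo_mem_nhdsLT_of_mem ⟨by linarith [Real.pi_pos], le_refl t⟩
  have hev : ∀ᶠ s in 𝓝[<] t, p s ∈ edge K s := by
    filter_upwards [hIoo] with s hs; exact hp s hs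
  have hmemK : ∀ᶠ s in 𝓝[<] t, p s ∈ K := by filter_upwards [hev] with s hs; exact hs.1
  have hsupp : ∀ᶠ s in 𝓝[<] t, dotp (p s) (uvec s) = suppFn K s := by
    filter_upwards [hev] with s hs; exact hs.2
  have ha : Tendsto (fun s => dotp (p s) (uvec t)) (𝓝[<] t) (𝓝 (suppFn K t)) :=
    tendsto_dotp_u hne hc t nhdsWithin_le_nhds hmemK hsupp
  set M : ℝ := dotp (vminus K t) (vvec t) with hM
  have hupp : ∀ᶠ s in 𝓝[<] t, dotp (p s) (vvec t) ≤ M := by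
    filter_upwards [hIoo, hev, hmemK] with s hs hse hsK
    have hsin : Real.sin (s - t) < 0 :=
      Real.sin_neg_of_neg_of_neg_pi_lt (by linarith [hs.2]) (by linarith [hs.1, Real.pi_pos])
    have hcos : 0 ≤ Real.cos (s - t) :=
      Real.cos_nonneg_of_mem_Icc ⟨by linarith [hs.1], by linarith [hs.2, Real.pi_pos]⟩
    have e1 := dotp_rot t s (p s)
    have e2 := dotp_rot t s (vminus K t)
    rw [dotp_vminus_u hne hc t, ← hM] at e2
    have i1 : dotp (vminus K t) (uvec s) ≤ suppFn K s :=
      le_suppFn hc (vminus_spec hne hc t).1.1 s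
    have i2 : dotp (p s) (uvec t) ≤ suppFn K t := le_suppFn hc hsK t
    have i3 : dotp (p s) (uvec s) = suppFn K s := hse.2
    have i4 : Real.cos (s - t) * dotp (p s) (uvec t) ≤ Real.cos (s - t) * suppFn K t :=
      mul_le_mul_of_nonneg_left i2 hcos
    have key : Real.sin (s - t) * M ≤ Real.sin (s - t) * dotp (p s) (vvec t) := by
      nlinarith [e1, e2, i1, i3, i4]
    nlinarith [key, hsin]
  have hb : Tendsto (fun s => dotp (p s) (vvec t)) (𝓝[<] t) (𝓝 M) := by
    rw [Metric.tendsto_nhds]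
    intro ε hε
    filter_upwards [eventually_slice_gt hne hc t hε hmemK ha, hupp] with s h1 h2
    rw [Real.dist_eq, abs_lt]
    constructor <;> [linarith; linarith]
  have hfin : Tendsto (fun s => dotp (p s) (uvec t) • uvec t + dotp (p s) (vvec t) • vvec t)
      (𝓝[<] t) (𝓝 (suppFn K t • uvec t + M • vvec t)) :=
    (ha.smul_const _).add (hb.smul_const _)
  have hvp : vminus K t = suppFn K t • uvec t + M • vvec t := by
    conv_lhs => rw [expand_pt t (vminus K t)]
    rw [dotp_vminus_u hne hc t]
  rw [hvp]
  exact hfin.congr fun s => (expand_pt t (p s)).symm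

end Aux4

section Aux5
variable {K : Set Pt}

lemma vinter_coord (K : Set Pt) (a b : ℝ) (hab : Real.sin (b - a) ≠ 0) :
    dotp (vinter K a b) (uvec a) = suppFn K a ∧ dotp (vinter K a b) (uvec b) = suppFn K b := by
  constructor
  · simp only [vinter, dotp, uvec, mk2]
    simp only [WithLp.equiv_symm_apply, PiLp.toLp_apply, Matrix.cons_val_zero, Matrix.cons_val_one, Matrix.head_cons]
    field_simp
    linear_combination (-(suppFn K a)) * Real.sin_sub b a
  · simp only [vinter, dotp, uvec, mk2]
    simp only [WithLp.equiv_symm_apply, PiLp.toLp_apply, Matrix.cons_val_zero, Matrix.cons_val_one, Matrix.head_cons]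
    field_simp
    linear_combination (-(suppFn K b)) * Real.sin_sub b a

lemma tendsto_vinter_right (hne : K.Nonempty) (hc : IsCompact K) (t : ℝ) :
    Tendsto (fun s => vinter K t s) (𝓝[>] t) (𝓝 (vplus K t)) := by
  have hVp : Tendsto (vplus K) (𝓝[>] t) (𝓝 (vplus K t)) :=
    tendsto_right_edge hne hc t (fun s _ => (vplus_spec hne hc s).1)
  have hbp : Tendsto (fun s => dotp (vplus K s) (vvec t)) (𝓝[>] t)
      (𝓝 (dotp (vplus K t) (vvec t))) := ((cont_dotp (vvec t)).tendsto _).comp hVp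
  have hIoo : Ioo t (t + π/2) ∈ 𝓝[>] t :=
    Ioo_mem_nhdsGT_of_mem ⟨le_refl t, by linarith [Real.pi_pos]⟩
  set M : ℝ := dotp (vplus K t) (vvec t) with hM
  have hC : ∀ᶠ s in 𝓝[>] t, M ≤ dotp (vinter K t s) (vvec t) ∧
      dotp (vinter K t s) (vvec t) ≤ dotp (vplus K s) (vvec t) ∧
      dotp (vinter K t s) (uvec t) = suppFn K t := by
    filter_upwards [hIoo] with s hs
    have hsin : 0 < Real.sin (s - t) :=
      Real.sin_pos_of_pos_of_lt_pi (by linarith [hs.1]) (by linarith [hs.2, Real.pi_pos])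
    have hcos : 0 ≤ Real.cos (s - t) :=
      Real.cos_nonneg_of_mem_Icc ⟨by linarith [hs.1, Real.pi_pos], by linarith [hs.2]⟩
    obtain ⟨hA, hB⟩ := vinter_coord K t s (ne_of_gt hsin)
    have e1 := dotp_rot t s (vinter K t s)
    rw [hB, hA] at e1
    have i1 : dotp (vplus K t) (uvec s) ≤ suppFn K s :=
      le_suppFn hc (vplus_spec hne hc t).1.1 s
    have e2 := dotp_rot t s (vplus K t)
    rw [dotp_vplus_u hne hc t, ← hM] at e2
    have low : M ≤ dotp (vinter K t s) (vvec t) := by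
      have key : Real.sin (s - t) * M ≤ Real.sin (s - t) * dotp (vinter K t s) (vvec t) := by
        nlinarith [i1, e1, e2]
      exact (mul_le_mul_iff_right₀ hsin).mp key
    have e3 := dotp_rot t s (vplus K s)
    rw [dotp_vplus_u hne hc s] at e3
    have i2 : dotp (vplus K s) (uvec t) ≤ suppFn K t :=
      le_suppFn hc (vplus_spec hne hc s).1.1 t
    have i4 : Real.cos (s - t) * dotp (vplus K s) (uvec t)
        ≤ Real.cos (s - t) * suppFn K t := mul_le_mul_of_nonneg_left i2 hcos
    have upp : dotp (vinter K t s) (vvec t) ≤ dotp (vplus K s) (vvec t) := by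
      have key : Real.sin (s - t) * dotp (vinter K t s) (vvec t)
          ≤ Real.sin (s - t) * dotp (vplus K s) (vvec t) := by
        nlinarith [e1, e3, i4]
      exact (mul_le_mul_iff_right₀ hsin).mp key
    exact ⟨low, upp, hA⟩
  have hCt : Tendsto (fun s => dotp (vinter K t s) (vvec t)) (𝓝[>] t) (𝓝 M) := by
    refine tendsto_of_tendsto_of_tendsto_of_le_of_le' tendsto_const_nhds hbp ?_ ?_
    · filter_upwards [hC] with s hs; exact hs.1
    · filter_upwards [hC] with s hs; exact hs.2.1
  have hAt : Tendsto (fun s => dotp (vinter K t s) (uvec t)) (𝓝[>] t) (𝓝 (suppFn K t)) := by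
    refine Tendsto.congr' ?_ (tendsto_const_nhds (x := suppFn K t))
    filter_upwards [hC] with s hs
    exact hs.2.2.symm
  have hfin := (hAt.smul_const (uvec t)).add (hCt.smul_const (vvec t))
  have hvp : vplus K t = suppFn K t • uvec t + M • vvec t := by
    conv_lhs => rw [expand_pt t (vplus K t)]
    rw [dotp_vplus_u hne hc t]
  rw [hvp]
  exact hfin.congr fun s => (expand_pt t (vinter K t s)).symm

lemma tendsto_vinter_left (hne : K.Nonempty) (hc : IsCompact K) (t : ℝ) :
    Tendsto (fun s => vinter K s t) (𝓝[<] t) (𝓝 (vminus K t)) := by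
  have hVm : Tendsto (vminus K) (𝓝[<] t) (𝓝 (vminus K t)) :=
    tendsto_left_edge hne hc t (fun s _ => (vminus_spec hne hc s).1)
  have hbm : Tendsto (fun s => dotp (vminus K s) (vvec t)) (𝓝[<] t)
      (𝓝 (dotp (vminus K t) (vvec t))) := ((cont_dotp (vvec t)).tendsto _).comp hVm
  have hIoo : Ioo (t - π/2) t ∈ 𝓝[<] t :=
    Ioo_mem_nhdsLT_of_mem ⟨by linarith [Real.pi_pos], le_refl t⟩
  set M : ℝ := dotp (vminus K t) (vvec t) with hM
  have hC : ∀ᶠ s in 𝓝[<] t, dotp (vminus K s) (vvec t) ≤ dotp (vinter K s t) (vvec t) ∧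
      dotp (vinter K s t) (vvec t) ≤ M ∧
      dotp (vinter K s t) (uvec t) = suppFn K t := by
    filter_upwards [hIoo] with s hs
    have hsin : Real.sin (s - t) < 0 :=
      Real.sin_neg_of_neg_of_neg_pi_lt (by linarith [hs.2]) (by linarith [hs.1, Real.pi_pos])
    have hcos : 0 ≤ Real.cos (s - t) :=
      Real.cos_nonneg_of_mem_Icc ⟨by linarith [hs.1], by linarith [hs.2, Real.pi_pos]⟩
    have hts : Real.sin (t - s) ≠ 0 := by
      have : Real.sin (t - s) = -Real.sin (s - t) := by
        rw [← Real.sin_neg]; ring_nf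
      rw [this]; exact ne_of_gt (by linarith)
    obtain ⟨hA, hB⟩ := vinter_coord K s t hts
    have e1 := dotp_rot t s (vinter K s t)
    rw [hA, hB] at e1
    have i1 : dotp (vminus K t) (uvec s) ≤ suppFn K s :=
      le_suppFn hc (vminus_spec hne hc t).1.1 s
    have e2 := dotp_rot t s (vminus K t)
    rw [dotp_vminus_u hne hc t, ← hM] at e2
    have upp : dotp (vinter K s t) (vvec t) ≤ M := by
      have key : Real.sin (s - t) * M ≤ Real.sin (s - t) * dotp (vinter K s t) (vvec t) := by
        nlinarith [i1, e1, e2]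
      nlinarith [key, hsin]
    have e3 := dotp_rot t s (vminus K s)
    rw [dotp_vminus_u hne hc s] at e3
    have i2 : dotp (vminus K s) (uvec t) ≤ suppFn K t :=
      le_suppFn hc (vminus_spec hne hc s).1.1 t
    have i4 : Real.cos (s - t) * dotp (vminus K s) (uvec t)
        ≤ Real.cos (s - t) * suppFn K t := mul_le_mul_of_nonneg_left i2 hcos
    have low : dotp (vminus K s) (vvec t) ≤ dotp (vinter K s t) (vvec t) := by
      have key : Real.sin (s - t) * dotp (vinter K s t) (vvec t)
          ≤ Real.sin (s - t) * dotp (vminus K s) (vvec t) := by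
        nlinarith [e1, e3, i4]
      nlinarith [key, hsin]
    exact ⟨low, upp, hB⟩
  have hCt : Tendsto (fun s => dotp (vinter K s t) (vvec t)) (𝓝[<] t) (𝓝 M) := by
    refine tendsto_of_tendsto_of_tendsto_of_le_of_le' hbm tendsto_const_nhds ?_ ?_
    · filter_upwards [hC] with s hs; exact hs.1
    · filter_upwards [hC] with s hs; exact hs.2.1
  have hAt : Tendsto (fun s => dotp (vinter K s t) (uvec t)) (𝓝[<] t) (𝓝 (suppFn K t)) := by
    refine Tendsto.congr' ?_ (tendsto_const_nhds (x := suppFn K t))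
    filter_upwards [hC] with s hs
    exact hs.2.2.symm
  have hfin := (hAt.smul_const (uvec t)).add (hCt.smul_const (vvec t))
  have hvp : vminus K t = suppFn K t • uvec t + M • vvec t := by
    conv_lhs => rw [expand_pt t (vminus K t)]
    rw [dotp_vminus_u hne hc t]
  rw [hvp]
  exact hfin.congr fun s => (expand_pt t (vinter K s t)).symm

end Aux5

theorem stmt_0 (K : Set Pt) (hK : IsConvexBody K) (t : ℝ) :
    Tendsto (fun s => vplus K s) (𝓝[>] t) (𝓝 (vplus K t)) ∧
    Tendsto (fun s => vminus K s) (𝓝[>] t) (𝓝 (vplus K t)) ∧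
    Tendsto (fun s => vinter K t s) (𝓝[>] t) (𝓝 (vplus K t)) ∧
    Tendsto (fun s => vplus K s) (𝓝[<] t) (𝓝 (vminus K t)) ∧
    Tendsto (fun s => vminus K s) (𝓝[<] t) (𝓝 (vminus K t)) ∧
    Tendsto (fun s => vinter K s t) (𝓝[<] t) (𝓝 (vminus K t)) := by
  obtain ⟨hne, hc, -⟩ := hK
  exact ⟨tendsto_right_edge hne hc t (fun s _ => (vplus_spec hne hc s).1),
    tendsto_right_edge hne hc t (fun s _ => (vminus_spec hne hc s).1),
    tendsto_vinter_right hne hc t,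
    tendsto_left_edge hne hc t (fun s _ => (vplus_spec hne hc s).1),
    tendsto_left_edge hne hc t (fun s _ => (vminus_spec hne hc s).1),
    tendsto_vinter_left hne hc t⟩
end
end

section
/- Let K be a cap with rotation angle ω ∈ (0, π/2]. Then for every angle t ∈ (0, ω), the wedge gaps are strictly positive: w_K(t) > 0 and z_K(t) > 0. -/
noncomputable section

open Real MeasureTheory Set Filter Topology

section AuxStmt2

@[simp] lemma mk2_app0 (x y : ℝ) : mk2 x y 0 = x := rfl
@[simp] lemma mk2_app1 (x y : ℝ) : mk2 x y 1 = y := rfl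
@[simp] lemma uvec_app0 (s : ℝ) : uvec s 0 = Real.cos s := rfl
@[simp] lemma uvec_app1 (s : ℝ) : uvec s 1 = Real.sin s := rfl
@[simp] lemma vvec_app0 (s : ℝ) : vvec s 0 = -Real.sin s := rfl
@[simp] lemma vvec_app1 (s : ℝ) : vvec s 1 = Real.cos s := rfl

lemma sin_lt_one_aux {x : ℝ} (h1 : -(π/2) ≤ x) (h2 : x < π/2) : Real.sin x < 1 := by
  have hp := Real.pi_pos
  have := Real.strictMonoOn_sin ⟨h1, h2.le⟩ ⟨by linarith, le_refl _⟩ h2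
  simpa using this

lemma bdd_supp (K : Set Pt) (hc : IsCompact K) (s : ℝ) :
    BddAbove ((fun p => dotp p (uvec s)) '' K) := by
  have hcont : Continuous fun p : Pt => dotp p (uvec s) := by unfold dotp; fun_prop
  exact (hc.image hcont).bddAbove

lemma dotp_le_supp {K : Set Pt} {p : Pt} (hc : IsCompact K) (s : ℝ) (hp : p ∈ K) :
    dotp p (uvec s) ≤ suppFn K s := le_csSup (bdd_supp K hc s) ⟨p, hp, rfl⟩

lemma supp_comb (K : Set Pt) (hne : K.Nonempty) (hc : IsCompact K)
    {a b c α β : ℝ} (hα : 0 ≤ α) (hβ : 0 ≤ β)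
    (hcos : Real.cos c = α * Real.cos a + β * Real.cos b)
    (hsin : Real.sin c = α * Real.sin a + β * Real.sin b) :
    suppFn K c ≤ α * suppFn K a + β * suppFn K b := by
  refine csSup_le (hne.image _) ?_
  rintro x ⟨p, hp, rfl⟩
  have ha := dotp_le_supp hc a hp
  have hb := dotp_le_supp hc b hp
  simp only [dotp, uvec_app0, uvec_app1] at ha hb ⊢
  rw [hcos, hsin]
  nlinarith [mul_le_mul_of_nonneg_left ha hα, mul_le_mul_of_nonneg_left hb hβ]

lemma dot_uu (a b w y : ℝ) :
    dotp ((a • uvec 0 + b • vvec 0) - mk2 w y) (uvec 0) = a - w := by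
  simp [dotp]

lemma dot_vv (a b c ω : ℝ) :
    dotp ((a • uvec (ω + π/2) + b • vvec (ω + π/2)) - c • vvec ω) (vvec ω) = a - c := by
  simp [dotp, Real.cos_add, Real.sin_add]
  ring_nf
  linear_combination (a - c) * Real.sin_sq_add_cos_sq ω

lemma wgap_eq (K : Set Pt) (t : ℝ) :
    wgap K t = suppFn K 0 - (suppFn K t - 1) / Real.cos t := by
  rw [wgap, vminus, Wpt]; exact dot_uu _ _ _ _

lemma zgap_eq (ω : ℝ) (K : Set Pt) (t : ℝ) :
    zgap ω K t = suppFn K (ω + π/2) -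
      (suppFn K (t + π/2) - 1) / Real.sin (t + π/2 - ω) := by
  rw [zgap, vplus, Zpt]; exact dot_vv _ _ _ _

end AuxStmt2

theorem stmt_2 (ω : ℝ) (hω : ω ∈ Ioc 0 (π/2)) (K : Set Pt) (hK : IsCap ω K)
    (t : ℝ) (ht : t ∈ Ioo 0 ω) :
    0 < wgap K t ∧ 0 < zgap ω K t := by
  obtain ⟨⟨hne, hcomp, -⟩, hsω, hsπ2, -, -, -⟩ := hK
  obtain ⟨ht0, htω⟩ := ht
  obtain ⟨hω0, hωπ⟩ := hω
  have hπ := Real.pi_pos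
  have hcost : 0 < Real.cos t := Real.cos_pos_of_mem_Ioo ⟨by linarith, by linarith⟩
  have hsint : 0 < Real.sin t := Real.sin_pos_of_pos_of_lt_pi ht0 (by linarith)
  have hsintlt : Real.sin t < 1 := sin_lt_one_aux (by linarith) (by linarith)
  have hsinω : 0 < Real.sin ω := Real.sin_pos_of_pos_of_lt_pi hω0 (by linarith)
  have hcosω : 0 ≤ Real.cos ω := Real.cos_nonneg_of_mem_Icc ⟨by linarith, hωπ⟩
  have hA : 0 < Real.sin (ω - t) := Real.sin_pos_of_pos_of_lt_pi (by linarith) (by linarith)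
  have hA1 : Real.sin (ω - t) < 1 := sin_lt_one_aux (by linarith) (by linarith)
  have hcosωt : 0 < Real.cos (ω - t) := Real.cos_pos_of_mem_Ioo ⟨by linarith, by linarith⟩
  constructor
  · rw [wgap_eq]
    have h1 : suppFn K t ≤ Real.cos t * suppFn K 0 + Real.sin t * suppFn K (π/2) :=
      supp_comb K hne hcomp hcost.le hsint.le (by simp) (by simp)
    rw [hsπ2] at h1
    have hlt : (suppFn K t - 1) / Real.cos t < suppFn K 0 := by
      rw [div_lt_iff₀ hcost]
      nlinarith
    linarith
  · rw [zgap_eq]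
    have hss : t + π/2 - ω = π/2 - (ω - t) := by ring
    rw [hss, Real.sin_pi_div_two_sub]
    have h2 : suppFn K (π/2) ≤ Real.sin ω * suppFn K ω + Real.cos ω * suppFn K (ω + π/2) :=
      supp_comb K hne hcomp hsinω.le hcosω
        (by rw [Real.cos_pi_div_two, Real.cos_add_pi_div_two]; ring)
        (by rw [Real.sin_pi_div_two, Real.sin_add_pi_div_two]
            linear_combination (-1 : ℝ) * Real.sin_sq_add_cos_sq ω)
    rw [hsπ2, hsω] at h2
    have hCH : 1 - Real.sin ω ≤ Real.cos ω * suppFn K (ω + π/2) := by linarith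
    have h3 : suppFn K (t + π/2) ≤ (Real.sin (ω - t) / Real.sin ω) * suppFn K (π/2) +
        (Real.sin t / Real.sin ω) * suppFn K (ω + π/2) :=
      supp_comb K hne hcomp (by positivity) (by positivity)
        (by rw [Real.cos_add_pi_div_two, Real.cos_add_pi_div_two, Real.cos_pi_div_two]
            field_simp
            ring)
        (by rw [Real.sin_add_pi_div_two, Real.sin_add_pi_div_two, Real.sin_pi_div_two]
            rw [Real.sin_sub]
            field_simp
            ring)
    rw [hsπ2] at h3
    have hform : Real.sin (ω - t) / Real.sin ω * 1 +
        Real.sin t / Real.sin ω * suppFn K (ω + π/2) =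
        (Real.sin (ω - t) + Real.sin t * suppFn K (ω + π/2)) / Real.sin ω := by
      field_simp
    rw [hform, le_div_iff₀ hsinω] at h3
    have hid : suppFn K (ω + π/2) * Real.cos (ω - t) * Real.sin ω -
        Real.sin t * suppFn K (ω + π/2) =
        suppFn K (ω + π/2) * Real.cos ω * Real.sin (ω - t) := by
      rw [Real.cos_sub]
      linear_combination suppFn K (ω + π/2) * Real.sin t * Real.sin_sq_add_cos_sq ω -
        suppFn K (ω + π/2) * Real.cos ω * Real.sin_sub ω t
    have hprod : (1 - Real.sin ω) * Real.sin (ω - t) ≤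
        Real.cos ω * suppFn K (ω + π/2) * Real.sin (ω - t) :=
      mul_le_mul_of_nonneg_right hCH hA.le
    have hBA : Real.sin ω * Real.sin (ω - t) < Real.sin ω := by nlinarith
    have hmul : (suppFn K (t + π/2) - 1) * Real.sin ω <
        suppFn K (ω + π/2) * Real.cos (ω - t) * Real.sin ω := by nlinarith
    have key : suppFn K (t + π/2) - 1 < suppFn K (ω + π/2) * Real.cos (ω - t) :=
      lt_of_mul_lt_mul_right hmul hsinω.le
    have hlt : (suppFn K (t + π/2) - 1) / Real.cos (ω - t) < suppFn K (ω + π/2) := by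
      rw [div_lt_iff₀ hcosωt]
      exact key
    linarith
end
end

section
/- Let K be a cap with rotation angle ω ∈ (0, π/2] and let t ∈ (0, ω). If the inner corner x_K(t) lies in K, then the wedge T_K(t) is a subset of K. -/
noncomputable section

open Real MeasureTheory Set Filter Topology

set_option maxHeartbeats 1600000 in
theorem stmt_3 (ω : ℝ) (hω : ω ∈ Ioc 0 (π/2)) (K : Set Pt) (hK : IsCap ω K)
    (t : ℝ) (ht : t ∈ Ioo 0 ω) (hx : innerCorner K t ∈ K) :
    wedge ω K t ⊆ K := by
  obtain ⟨⟨hne, hcomp, hconv⟩, hsupω, hsupπ2, hsupωπ, hsup3π2, hKeq⟩ := hK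
  obtain ⟨ht0, htω⟩ := ht
  obtain ⟨hω0, hωπ2⟩ := hω
  have hπ := Real.pi_pos
  have htπ2 : t < π/2 := lt_of_lt_of_le htω hωπ2
  have hdot : ∀ (q : Pt) (s : ℝ), dotp q (uvec s) = q 0 * Real.cos s + q 1 * Real.sin s :=
    fun q s => rfl
  have hcont : ∀ s : ℝ, Continuous fun q : Pt => dotp q (uvec s) := fun s =>
    ((PiLp.continuous_apply 2 _ (0 : Fin 2)).mul continuous_const).add
      ((PiLp.continuous_apply 2 _ (1 : Fin 2)).mul continuous_const)
  have hle : ∀ q ∈ K, ∀ s : ℝ, dotp q (uvec s) ≤ suppFn K s := by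
    intro q hq s
    exact le_csSup ((hcomp.image (hcont s)).bddAbove) ⟨q, hq, rfl⟩
  have hmax : ∀ s : ℝ, ∃ z ∈ K, dotp z (uvec s) = suppFn K s := by
    intro s
    obtain ⟨z, hzK, hz⟩ := hcomp.exists_isMaxOn hne ((hcont s).continuousOn)
    have hg : IsGreatest ((fun q => dotp q (uvec s)) '' K) (dotp z (uvec s)) := by
      constructor
      · exact ⟨z, hzK, rfl⟩
      · rintro r ⟨q, hq, rfl⟩
        exact hz hq
    exact ⟨z, hzK, hg.csSup_eq.symm⟩
  obtain ⟨z, hzK, hzt⟩ := hmax t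
  obtain ⟨w, hwK, hwt⟩ := hmax (t + π/2)
  intro p hp
  have hp1 := hp.1
  have hp2 := hp.2
  simp only [fan, Set.mem_setOf_eq] at hp1
  simp only [Qminus, Set.mem_setOf_eq] at hp2
  obtain ⟨hpω, hpπ⟩ := hp1
  obtain ⟨hpt, hptv⟩ := hp2
  have hpω' : 0 ≤ p 0 * Real.cos ω + p 1 * Real.sin ω := by rw [hdot] at hpω; exact hpω
  have hpπ' : 0 ≤ p 1 := by
    rw [hdot, Real.cos_pi_div_two, Real.sin_pi_div_two] at hpπ; linarith
  have hpt' : p 0 * Real.cos t + p 1 * Real.sin t ≤ suppFn K t - 1 := by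
    rw [hdot] at hpt; linarith
  have hptv' : -(p 0) * Real.sin t + p 1 * Real.cos t ≤ suppFn K (t + π/2) - 1 := by
    have h := le_of_lt hptv
    rw [hdot, Real.cos_add_pi_div_two, Real.sin_add_pi_div_two] at h
    linarith
  have hzt' : z 0 * Real.cos t + z 1 * Real.sin t = suppFn K t := by
    rw [← hzt, hdot]
  have hz1 : z 1 ≤ 1 := by
    have h := hle z hzK (π/2)
    rw [hdot, Real.cos_pi_div_two, Real.sin_pi_div_two, hsupπ2] at h
    linarith
  have hwt' : -(w 0) * Real.sin t + w 1 * Real.cos t = suppFn K (t + π/2) := by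
    rw [← hwt, hdot, Real.cos_add_pi_div_two, Real.sin_add_pi_div_two]
    ring
  have hwω : w 0 * Real.cos ω + w 1 * Real.sin ω ≤ 1 := by
    have h := hle w hwK ω
    rw [hdot, hsupω] at h
    exact h
  have hzs : ∀ s : ℝ, z 0 * Real.cos s + z 1 * Real.sin s ≤ suppFn K s := by
    intro s; have h := hle z hzK s; rwa [hdot] at h
  have hws : ∀ s : ℝ, w 0 * Real.cos s + w 1 * Real.sin s ≤ suppFn K s := by
    intro s; have h := hle w hwK s; rwa [hdot] at h
  have hxc0 : (innerCorner K t) 0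
      = (suppFn K t - 1) * Real.cos t - (suppFn K (t + π/2) - 1) * Real.sin t := by
    simp [innerCorner, uvec, vvec, mk2, PiLp.add_apply, PiLp.smul_apply, smul_eq_mul]
    ring
  have hxc1 : (innerCorner K t) 1
      = (suppFn K t - 1) * Real.sin t + (suppFn K (t + π/2) - 1) * Real.cos t := by
    simp [innerCorner, uvec, vvec, mk2, PiLp.add_apply, PiLp.smul_apply, smul_eq_mul]
  have hxs : ∀ s : ℝ, (suppFn K t - 1) * Real.cos (s - t)
      + (suppFn K (t + π/2) - 1) * Real.sin (s - t) ≤ suppFn K s := by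
    intro s
    have h := hle _ hx s
    rw [hdot, hxc0, hxc1] at h
    calc (suppFn K t - 1) * Real.cos (s - t) + (suppFn K (t + π/2) - 1) * Real.sin (s - t)
        = ((suppFn K t - 1) * Real.cos t - (suppFn K (t + π/2) - 1) * Real.sin t) * Real.cos s
          + ((suppFn K t - 1) * Real.sin t + (suppFn K (t + π/2) - 1) * Real.cos t)
            * Real.sin s := by
          rw [Real.cos_sub, Real.sin_sub]; ring
      _ ≤ suppFn K s := h
  have hct : 0 < Real.cos t := Real.cos_pos_of_mem_Ioo (Set.mem_Ioo.2 ⟨by linarith, htπ2⟩)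
  have hst : 0 ≤ Real.sin t := Real.sin_nonneg_of_nonneg_of_le_pi (le_of_lt ht0) (by linarith)
  rw [hKeq]
  refine Set.mem_iInter₂.2 ?_
  intro s hs
  simp only [Jset, Set.mem_union, Set.mem_Icc, Set.mem_insert_iff, Set.mem_singleton_iff] at hs
  simp only [Set.mem_setOf_eq, hdot]
  -- middle case helper: t ≤ s ≤ t + π/2
  have middle : 0 ≤ Real.cos (s - t) → 0 ≤ Real.sin (s - t)
      → p 0 * Real.cos s + p 1 * Real.sin s ≤ suppFn K s := by
    intro h1 h2
    have e1 : p 0 * Real.cos s + p 1 * Real.sin s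
        = Real.cos (s - t) * (p 0 * Real.cos t + p 1 * Real.sin t)
          + Real.sin (s - t) * (-(p 0) * Real.sin t + p 1 * Real.cos t) := by
      rw [Real.cos_sub, Real.sin_sub]
      linear_combination (-(p 0 * Real.cos s + p 1 * Real.sin s)) * Real.sin_sq_add_cos_sq t
    have m1 := mul_le_mul_of_nonneg_left hpt' h1
    have m2 := mul_le_mul_of_nonneg_left hptv' h2
    have := hxs s
    linarith
  rcases hs with (⟨hs0, hsω⟩ | ⟨hsπ2, hsωπ2⟩) | hs | hs
  · -- s ∈ [0, ω]
    rcases le_or_gt s t with hsle | hslt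
    · -- s ≤ t : use maximizer z at angle t
      have hcs : 0 < Real.cos s := Real.cos_pos_of_mem_Ioo (Set.mem_Ioo.2 ⟨by linarith, by linarith⟩)
      have hss : 0 ≤ Real.sin s := Real.sin_nonneg_of_nonneg_of_le_pi hs0 (by linarith)
      have hsts : 0 ≤ Real.sin (t - s) :=
        Real.sin_nonneg_of_nonneg_of_le_pi (by linarith) (by linarith)
      have e4 : Real.sin (t - s) ≤ Real.cos s := by
        rw [Real.sin_sub]
        nlinarith [mul_nonneg (sub_nonneg.2 (Real.sin_le_one t)) hcs.le,
          mul_nonneg hct.le hss]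
      have e1 : Real.cos t * (p 0 * Real.cos s + p 1 * Real.sin s)
          = Real.cos s * (p 0 * Real.cos t + p 1 * Real.sin t) - Real.sin (t - s) * p 1 := by
        rw [Real.sin_sub]; ring
      have e2 : Real.cos t * (z 0 * Real.cos s + z 1 * Real.sin s)
          = Real.cos s * (z 0 * Real.cos t + z 1 * Real.sin t) - Real.sin (t - s) * z 1 := by
        rw [Real.sin_sub]; ring
      have m1 := mul_le_mul_of_nonneg_left hpt' hcs.le
      have m2 : 0 ≤ Real.sin (t - s) * p 1 := mul_nonneg hsts hpπ'
      have m3 : Real.sin (t - s) * z 1 ≤ Real.sin (t - s) * 1 :=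
        mul_le_mul_of_nonneg_left hz1 hsts
      have m4 : Real.cos s * (z 0 * Real.cos t + z 1 * Real.sin t)
          = Real.cos s * suppFn K t := by rw [hzt']
      have key : Real.cos t * (p 0 * Real.cos s + p 1 * Real.sin s)
          ≤ Real.cos t * (z 0 * Real.cos s + z 1 * Real.sin s) := by
        rw [e1, e2, m4]
        linarith
      have := (mul_le_mul_iff_right₀ hct).mp key
      linarith [hzs s]
    · -- t < s ≤ ω
      refine middle ?_ ?_
      · exact Real.cos_nonneg_of_mem_Icc (Set.mem_Icc.2 ⟨by linarith, by linarith⟩)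
      · exact Real.sin_nonneg_of_nonneg_of_le_pi (by linarith) (by linarith)
  · -- s ∈ [π/2, ω + π/2]
    rcases le_or_gt s (t + π/2) with hsle | hslt
    · refine middle ?_ ?_
      · exact Real.cos_nonneg_of_mem_Icc (Set.mem_Icc.2 ⟨by linarith, by linarith⟩)
      · exact Real.sin_nonneg_of_nonneg_of_le_pi (by linarith) (by linarith)
    · -- t + π/2 < s ≤ ω + π/2 : use maximizer w at angle t + π/2
      have hφ0 : 0 < ω - t := by linarith
      have hφ2 : ω - t < π/2 := by linarith
      have hθ0 : 0 ≤ s - t - π/2 := by linarith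
      have hθφ : s - t - π/2 ≤ ω - t := by linarith
      have hcφ : 0 < Real.cos (ω - t) := Real.cos_pos_of_mem_Ioo (Set.mem_Ioo.2 ⟨by linarith, hφ2⟩)
      have hD1 : 0 ≤ Real.cos (ω + π/2 - s) :=
        Real.cos_nonneg_of_mem_Icc (Set.mem_Icc.2 ⟨by linarith, by linarith⟩)
      have hD2 : 0 ≤ Real.sin (s - t - π/2) :=
        Real.sin_nonneg_of_nonneg_of_le_pi hθ0 (by linarith)
      have hid : ∀ q0 q1 : ℝ, Real.cos (ω - t) * (q0 * Real.cos s + q1 * Real.sin s)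
          = Real.cos (ω + π/2 - s) * (-q0 * Real.sin t + q1 * Real.cos t)
            - Real.sin (s - t - π/2) * (q0 * Real.cos ω + q1 * Real.sin ω) := by
        intro q0 q1
        rw [show ω + π/2 - s = (ω - s) + π/2 by ring,
          show s - t - π/2 = (s - t) - π/2 by ring,
          Real.cos_add_pi_div_two, Real.sin_sub_pi_div_two, Real.sin_sub,
          Real.cos_sub, Real.cos_sub]
        ring
      have hmono : Real.cos (ω - t) ≤ Real.cos (s - t - π/2) :=
        Real.cos_le_cos_of_nonneg_of_le_pi hθ0 (by linarith) hθφ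
      have hsφ : 0 ≤ Real.sin (ω - t) :=
        Real.sin_nonneg_of_nonneg_of_le_pi hφ0.le (by linarith)
      have hkey : Real.sin (s - t - π/2) ≤ Real.cos (ω + π/2 - s) := by
        rw [show ω + π/2 - s = (ω - t) - (s - t - π/2) by ring, Real.cos_sub]
        nlinarith [mul_nonneg (sub_nonneg.2 hmono) hcφ.le,
          mul_nonneg (sub_nonneg.2 (Real.sin_le_one (s - t - π/2)))
            (sub_nonneg.2 (Real.sin_le_one (ω - t))),
          Real.sin_sq_add_cos_sq (ω - t),
          mul_nonneg hsφ (sub_nonneg.2 (Real.sin_le_one (ω - t)))]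
      have c1 := hid (p 0) (p 1)
      have c2 := hid (w 0) (w 1)
      have m1 : Real.cos (ω + π/2 - s) * (-(p 0) * Real.sin t + p 1 * Real.cos t)
          ≤ Real.cos (ω + π/2 - s) * (suppFn K (t + π/2) - 1) :=
        mul_le_mul_of_nonneg_left hptv' hD1
      have m2 : 0 ≤ Real.sin (s - t - π/2) * (p 0 * Real.cos ω + p 1 * Real.sin ω) :=
        mul_nonneg hD2 hpω'
      have m3 : Real.sin (s - t - π/2) * (w 0 * Real.cos ω + w 1 * Real.sin ω)
          ≤ Real.sin (s - t - π/2) * 1 := mul_le_mul_of_nonneg_left hwω hD2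
      have m4 : Real.cos (ω + π/2 - s) * (-(w 0) * Real.sin t + w 1 * Real.cos t)
          = Real.cos (ω + π/2 - s) * suppFn K (t + π/2) := by rw [hwt']
      have key : Real.cos (ω - t) * (p 0 * Real.cos s + p 1 * Real.sin s)
          ≤ Real.cos (ω - t) * (w 0 * Real.cos s + w 1 * Real.sin s) := by
        rw [c1, c2, m4]
        linarith [m1, m2, m3, hkey]
      have := (mul_le_mul_iff_right₀ hcφ).mp key
      linarith [hws s]
  · -- s = ω + π
    subst hs
    rw [hsupωπ, Real.cos_add_pi, Real.sin_add_pi]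
    linarith
  · -- s = 3π/2
    subst hs
    rw [hsup3π2, show (3:ℝ) * π / 2 = π + π/2 by ring, Real.cos_add_pi_div_two,
      Real.sin_add_pi_div_two, Real.sin_pi, Real.cos_pi]
    linarith
end
end

section
/- Fix ω ∈ (0, π/2]. Let S be a nonempty, compact, connected subset of the parallelogram P_ω with h_S(ω) = h_S(π/2) = 1 and such that S ⊆ L_S(t) for every t ∈ [0, ω]. Then the intersection I(S) := P_ω ∩ ⋂_{t ∈ [0,ω]} L_S(t) is connected. -/
noncomputable section

open Real MeasureTheory Set Filter Topology

section AuxLemmas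

lemma aux_duu (a b : ℝ) : dotp (uvec a) (uvec b) = Real.cos (a - b) := by
  simp only [dotp, uvec, mk2, WithLp.equiv_symm_apply, PiLp.toLp_apply, Matrix.cons_val_zero,
    Matrix.cons_val_one, Matrix.head_cons, Real.cos_sub]

lemma aux_dvu (a b : ℝ) : dotp (vvec a) (uvec b) = Real.sin (b - a) := by
  simp [dotp, uvec, vvec, mk2, Real.sin_sub]; ring

lemma aux_duv (a b : ℝ) : dotp (uvec a) (vvec b) = Real.sin (a - b) := by
  simp [dotp, uvec, vvec, mk2, Real.sin_sub]; ring

lemma aux_dvv (a b : ℝ) : dotp (vvec a) (vvec b) = Real.cos (a - b) := by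
  simp [dotp, uvec, vvec, mk2, Real.cos_sub]; ring

lemma aux_uvec_pi2 (t : ℝ) : uvec (t + π/2) = vvec t := by
  unfold uvec vvec
  rw [Real.cos_add_pi_div_two, Real.sin_add_pi_div_two]

lemma aux_dotp_comm (p q : Pt) : dotp p q = dotp q p := by
  simp [dotp]; ring

lemma aux_dotp_add_left (p q r : Pt) : dotp (p + q) r = dotp p r + dotp q r := by
  have h0 : (p + q) 0 = p 0 + q 0 := rfl
  have h1 : (p + q) 1 = p 1 + q 1 := rfl
  simp [dotp, h0, h1]; ring

lemma aux_dotp_smul_left (c : ℝ) (p r : Pt) : dotp (c • p) r = c * dotp p r := by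
  have h0 : (c • p) 0 = c * p 0 := rfl
  have h1 : (c • p) 1 = c * p 1 := rfl
  simp [dotp, h0, h1]; ring

lemma aux_dotp_comb (a b : ℝ) (p q r : Pt) :
    dotp (a • p + b • q) r = a * dotp p r + b * dotp q r := by
  rw [aux_dotp_add_left, aux_dotp_smul_left, aux_dotp_smul_left]

lemma aux_parseval (s : ℝ) (z w : Pt) :
    dotp z w = dotp z (uvec s) * dotp w (uvec s) + dotp z (vvec s) * dotp w (vvec s) := by
  have hpy := Real.sin_sq_add_cos_sq s
  simp only [dotp, uvec, vvec, mk2]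
  simp only [WithLp.equiv_symm_apply, PiLp.toLp_apply, Matrix.cons_val_zero, Matrix.cons_val_one, Matrix.head_cons]
  linear_combination (-(z 0 * w 0) - z 1 * w 1) * hpy

lemma aux_cont (u : Pt) : Continuous fun p : Pt => dotp p u := by
  unfold dotp; fun_prop

lemma aux_mk2_cont : Continuous (fun p : ℝ × ℝ => mk2 p.1 p.2) := by
  unfold mk2
  have h1 : Continuous fun p : ℝ × ℝ => (![p.1, p.2] : Fin 2 → ℝ) := by
    apply continuous_pi
    intro i
    fin_cases i <;> simp <;> fun_prop
  exact (PiLp.continuous_toLp 2 (fun _ : Fin 2 => ℝ)).comp h1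

lemma aux_eq_mk2 (z : Pt) : z = mk2 (z 0) (z 1) := by
  ext i; fin_cases i <;> simp [mk2]

lemma aux_pt_ext (p q : Pt) (h0 : p 0 = q 0) (h1 : p 1 = q 1) : p = q := by
  ext i; fin_cases i
  · exact h0
  · exact h1

lemma aux_decomp (s : ℝ) (z : Pt) : dotp z (uvec s) • uvec s + dotp z (vvec s) • vvec s = z := by
  have hpy := Real.sin_sq_add_cos_sq s
  apply aux_pt_ext
  · show dotp z (uvec s) * uvec s 0 + dotp z (vvec s) * vvec s 0 = z 0
    simp only [dotp, uvec, vvec, mk2, WithLp.equiv_symm_apply, PiLp.toLp_apply, Matrix.cons_val_zero,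
      Matrix.cons_val_one, Matrix.head_cons]
    linear_combination (z 0) * hpy
  · show dotp z (uvec s) * uvec s 1 + dotp z (vvec s) * vvec s 1 = z 1
    simp only [dotp, uvec, vvec, mk2, WithLp.equiv_symm_apply, PiLp.toLp_apply, Matrix.cons_val_zero,
      Matrix.cons_val_one, Matrix.head_cons]
    linear_combination (z 1) * hpy

lemma aux_between {x y β : ℝ} (h1 : x ≤ β) (h2 : β ≤ y) :
    ∃ a b : ℝ, 0 ≤ a ∧ 0 ≤ b ∧ a + b = 1 ∧ a * x + b * y = β := by
  rcases eq_or_lt_of_le (h1.trans h2) with heq | hlt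
  · refine ⟨1, 0, by norm_num, by norm_num, by norm_num, ?_⟩
    have : x = β := le_antisymm h1 (by linarith [heq])
    simp [this]
  · refine ⟨(y - β)/(y - x), (β - x)/(y - x), ?_, ?_, ?_, ?_⟩
    · apply div_nonneg <;> linarith
    · apply div_nonneg <;> linarith
    · have : y - x ≠ 0 := by linarith
      field_simp; ring
    · have : y - x ≠ 0 := by linarith
      field_simp; ring

end AuxLemmas

set_option maxHeartbeats 1000000 in
theorem stmt_5 (ω : ℝ) (hω : ω ∈ Ioc 0 (π/2)) (S : Set Pt)
    (hne : S.Nonempty) (hcomp : IsCompact S) (hconn : IsConnected S)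
    (hsub : S ⊆ parall ω) (h1 : suppFn S ω = 1) (h2 : suppFn S (π/2) = 1)
    (hhall : ∀ t ∈ Icc (0:ℝ) ω, S ⊆ hallway S t) :
    IsConnected (parall ω ∩ ⋂ t ∈ Icc (0:ℝ) ω, hallway S t) := by
  obtain ⟨hω0, hω2⟩ := hω
  have hπ : (0:ℝ) < π := Real.pi_pos
  obtain ⟨sb, hsbdef⟩ : ∃ sb : ℝ, sb = ω/2 + π/4 := ⟨_, rfl⟩
  obtain ⟨e, hedef⟩ : ∃ e : Pt, e = uvec sb := ⟨_, rfl⟩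
  obtain ⟨f, hfdef⟩ : ∃ f : Pt, f = vvec sb := ⟨_, rfl⟩
  -- trig sign facts
  have hsbrange : ∀ t ∈ Icc (0:ℝ) ω, 0 ≤ sb - t ∧ sb - t ≤ π/2 := by
    intro t ht
    obtain ⟨ht0, htω⟩ := ht
    rw [hsbdef]
    constructor <;> linarith
  have hcosnn : ∀ t ∈ Icc (0:ℝ) ω, 0 ≤ Real.cos (sb - t) := by
    intro t ht
    obtain ⟨hr1, hr2⟩ := hsbrange t ht
    exact Real.cos_nonneg_of_mem_Icc ⟨by linarith, hr2⟩
  have hsinnn : ∀ t ∈ Icc (0:ℝ) ω, 0 ≤ Real.sin (sb - t) := by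
    intro t ht
    obtain ⟨hr1, hr2⟩ := hsbrange t ht
    exact Real.sin_nonneg_of_nonneg_of_le_pi hr1 (by linarith)
  have hee : dotp e e = 1 := by rw [hedef, aux_duu]; simp
  have hef : dotp e f = 0 := by rw [hedef, hfdef, aux_duv]; simp
  have hff : dotp f f = 1 := by rw [hfdef, aux_dvv]; simp
  -- support function basic facts
  have hBdd : ∀ u : Pt, BddAbove ((fun p => dotp p u) '' S) :=
    fun u => (hcomp.image (aux_cont u)).bddAbove
  have hImgNe : ∀ u : Pt, ((fun p => dotp p u) '' S).Nonempty := fun u => hne.image _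
  have hSupLe : ∀ r : ℝ, ∀ q ∈ S, dotp q (uvec r) ≤ suppFn S r := by
    intro r q hq
    exact le_csSup (hBdd (uvec r)) ⟨q, hq, rfl⟩
  -- the ambient convex compact set C
  obtain ⟨C, hCdef⟩ : ∃ C : Set Pt, C = parall ω ∩ ⋂ t ∈ Icc (0:ℝ) ω, Qplus S t := ⟨_, rfl⟩
  obtain ⟨G, hGdef⟩ : ∃ G : Set Pt, G = C ∩ ⋂ t ∈ Icc (0:ℝ) ω, (Qminus S t)ᶜ := ⟨_, rfl⟩
  have hGoalEq : parall ω ∩ ⋂ t ∈ Icc (0:ℝ) ω, hallway S t = G := by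
    rw [hGdef, hCdef]
    ext z
    simp only [hallway, mem_inter_iff, mem_iInter, mem_diff, mem_compl_iff]
    constructor
    · rintro ⟨hp, hq⟩
      exact ⟨⟨hp, fun t htm => (hq t htm).1⟩, fun t htm => (hq t htm).2⟩
    · rintro ⟨⟨hp, hq⟩, hr⟩
      exact ⟨hp, fun t htm => ⟨hq t htm, hr t htm⟩⟩
  have hSC : S ⊆ C := by
    rw [hCdef]
    intro q hq
    refine ⟨hsub hq, ?_⟩
    rw [mem_iInter₂]
    intro t htmem
    exact ⟨hSupLe t q hq, hSupLe (t + π/2) q hq⟩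
  have hSG : S ⊆ G := by
    rw [hGdef]
    intro q hq
    refine ⟨hSC hq, ?_⟩
    rw [mem_iInter₂]
    intro t htmem
    exact (hhall t htmem hq).2
  have hCclosed : IsClosed C := by
    rw [hCdef]
    apply IsClosed.inter
    · have : parall ω = (fun p => dotp p (uvec (π/2))) ⁻¹' (Icc 0 1)
          ∩ (fun p => dotp p (uvec ω)) ⁻¹' (Icc 0 1) := rfl
      rw [this]
      exact (isClosed_Icc.preimage (aux_cont _)).inter (isClosed_Icc.preimage (aux_cont _))
    · apply isClosed_biInter
      intro t htmem
      have : Qplus S t = (fun p => dotp p (uvec t)) ⁻¹' (Iic (suppFn S t))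
          ∩ (fun p => dotp p (uvec (t + π/2))) ⁻¹' (Iic (suppFn S (t + π/2))) := rfl
      rw [this]
      exact (isClosed_Iic.preimage (aux_cont _)).inter (isClosed_Iic.preimage (aux_cont _))
  have hCconv : Convex ℝ C := by
    rw [hCdef]
    apply Convex.inter
    · intro x hx y hy a b ha hb hab
      obtain ⟨hx1, hx2⟩ := hx
      obtain ⟨hy1, hy2⟩ := hy
      have hs1 : a * (1:ℝ) + b * 1 = 1 := by rw [mul_one, mul_one, hab]
      constructor
      · rw [aux_dotp_comb]
        constructor
        · have k1 := mul_le_mul_of_nonneg_left hx1.1 ha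
          have k2 := mul_le_mul_of_nonneg_left hy1.1 hb
          simp only [mul_zero] at k1 k2
          linarith
        · have k1 := mul_le_mul_of_nonneg_left hx1.2 ha
          have k2 := mul_le_mul_of_nonneg_left hy1.2 hb
          linarith
      · rw [aux_dotp_comb]
        constructor
        · have k1 := mul_le_mul_of_nonneg_left hx2.1 ha
          have k2 := mul_le_mul_of_nonneg_left hy2.1 hb
          simp only [mul_zero] at k1 k2
          linarith
        · have k1 := mul_le_mul_of_nonneg_left hx2.2 ha
          have k2 := mul_le_mul_of_nonneg_left hy2.2 hb
          linarith
    · apply convex_iInter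
      intro t
      apply convex_iInter
      intro htmem
      intro x hx y hy a b ha hb hab
      obtain ⟨hx1, hx2⟩ := hx
      obtain ⟨hy1, hy2⟩ := hy
      have hsum1 : a * suppFn S t + b * suppFn S t = suppFn S t := by
        rw [← add_mul, hab, one_mul]
      have hsum2 : a * suppFn S (t + π/2) + b * suppFn S (t + π/2) = suppFn S (t + π/2) := by
        rw [← add_mul, hab, one_mul]
      constructor
      · rw [aux_dotp_comb]
        have k1 := mul_le_mul_of_nonneg_left hx1 ha
        have k2 := mul_le_mul_of_nonneg_left hy1 hb
        linarith
      · rw [aux_dotp_comb]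
        have k1 := mul_le_mul_of_nonneg_left hx2 ha
        have k2 := mul_le_mul_of_nonneg_left hy2 hb
        linarith
  have hCcompact : IsCompact C := by
    have hsinω : 0 < Real.sin ω := Real.sin_pos_of_pos_of_lt_pi hω0 (by linarith)
    have hcosω : 0 ≤ Real.cos ω := Real.cos_nonneg_of_mem_Icc ⟨by linarith, hω2⟩
    have hy : ∀ z ∈ C, z 1 ∈ Icc (0:ℝ) 1 := by
      intro z hz
      rw [hCdef] at hz
      have h1 := hz.1.1
      have : dotp z (uvec (π/2)) = z 1 := by simp [dotp, uvec, mk2]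
      rwa [this] at h1
    have hx : ∀ z ∈ C, z 0 ∈ Icc (-(suppFn S (ω + π/2))/Real.sin ω) (suppFn S 0) := by
      intro z hz
      rw [hCdef] at hz
      have hzi := hz.2
      rw [mem_iInter₂] at hzi
      have h0 := (hzi 0 ⟨le_refl 0, hω0.le⟩).1
      have hω' := (hzi ω ⟨hω0.le, le_refl ω⟩).2
      have e0 : dotp z (uvec 0) = z 0 := by simp [dotp, uvec, mk2]
      have eω : dotp z (uvec (ω + π/2)) = -(z 0) * Real.sin ω + z 1 * Real.cos ω := by
        rw [aux_uvec_pi2]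
        simp [dotp, vvec, mk2]
      rw [e0] at h0
      rw [eω] at hω'
      have hz1 := hy z (by rw [hCdef]; exact hz)
      constructor
      · rw [div_le_iff₀ hsinω]
        nlinarith [mul_nonneg hz1.1 hcosω]
      · exact h0
    have hbox : IsCompact ((fun p : ℝ × ℝ => mk2 p.1 p.2) ''
        (Icc (-(suppFn S (ω + π/2))/Real.sin ω) (suppFn S 0) ×ˢ Icc (0:ℝ) 1)) :=
      (isCompact_Icc.prod isCompact_Icc).image aux_mk2_cont
    apply IsCompact.of_isClosed_subset hbox hCclosed
    intro z hz
    exact ⟨(z 0, z 1), ⟨hx z hz, hy z hz⟩, (aux_eq_mk2 z).symm⟩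
  -- coordinates
  obtain ⟨pr, hprdef⟩ : ∃ pr : Pt → ℝ, pr = fun z => dotp z f := ⟨_, rfl⟩
  obtain ⟨ht, hhtdef⟩ : ∃ ht : Pt → ℝ, ht = fun z => dotp z e := ⟨_, rfl⟩
  have hprcont : Continuous pr := by rw [hprdef]; exact aux_cont f
  have hhtcont : Continuous ht := by rw [hhtdef]; exact aux_cont e
  -- expansions
  have hexpU : ∀ z : Pt, ∀ t : ℝ, dotp z (uvec t)
      = ht z * Real.cos (sb - t) + pr z * Real.sin (t - sb) := by
    intro z t
    rw [hhtdef, hprdef, hedef, hfdef]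
    rw [aux_parseval sb z (uvec t), aux_duu, aux_duv]
    rw [show t - sb = -(sb - t) by ring, Real.cos_neg]
  have hexpV : ∀ z : Pt, ∀ t : ℝ, dotp z (vvec t)
      = ht z * Real.sin (sb - t) + pr z * Real.cos (sb - t) := by
    intro z t
    rw [hhtdef, hprdef, hedef, hfdef]
    rw [aux_parseval sb z (vvec t), aux_dvu, aux_dvv]
    rw [show t - sb = -(sb - t) by ring, Real.cos_neg]
  -- monotone preservation of quadrant-avoidance
  have hmono : ∀ z w : Pt, pr w = pr z → ht z ≤ ht w → ∀ t ∈ Icc (0:ℝ) ω,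
      z ∉ Qminus S t → ∀ a b : ℝ, 0 ≤ a → 0 ≤ b → a + b = 1 →
      (a • z + b • w) ∉ Qminus S t := by
    intro z w hpreq hhtle t htmem hz a b ha hb hab
    have hwu : dotp z (uvec t) ≤ dotp w (uvec t) := by
      rw [hexpU z t, hexpU w t, hpreq]
      have := mul_le_mul_of_nonneg_right hhtle (hcosnn t htmem)
      linarith
    have hwv : dotp z (vvec t) ≤ dotp w (vvec t) := by
      rw [hexpV z t, hexpV w t, hpreq]
      have := mul_le_mul_of_nonneg_right hhtle (hsinnn t htmem)
      linarith
    intro hmem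
    rw [Qminus, mem_setOf_eq] at hmem
    obtain ⟨hA, hB⟩ := hmem
    rw [aux_dotp_comb] at hA
    rw [aux_dotp_comb] at hB
    rw [Qminus, mem_setOf_eq, not_and, not_lt] at hz
    rcases lt_or_ge (dotp z (uvec t)) (suppFn S t - 1) with hc | hc
    · have h2 := hz hc
      rw [aux_uvec_pi2] at hB h2
      have k1 := mul_le_mul_of_nonneg_left hwv hb
      have hsum : a * dotp z (vvec t) + b * dotp z (vvec t) = dotp z (vvec t) := by
        rw [← add_mul, hab, one_mul]
      linarith
    · have k1 := mul_le_mul_of_nonneg_left hwu hb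
      have hsum : a * dotp z (uvec t) + b * dotp z (uvec t) = dotp z (uvec t) := by
        rw [← add_mul, hab, one_mul]
      linarith
  -- columns and tops
  obtain ⟨col, hcoldef⟩ : ∃ col : ℝ → Set Pt, col = fun β => {w | w ∈ C ∧ pr w = β} := ⟨_, rfl⟩
  obtain ⟨top, htopdef⟩ : ∃ top : ℝ → ℝ, top = fun β => sSup (ht '' col β) := ⟨_, rfl⟩
  obtain ⟨D, hDdef⟩ : ∃ D : Set ℝ, D = pr '' C := ⟨_, rfl⟩
  obtain ⟨Z, hZdef⟩ : ∃ Z : ℝ → Pt, Z = fun β => top β • e + β • f := ⟨_, rfl⟩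
  have hdotZ : ∀ β : ℝ, ∀ w : Pt, dotp (Z β) w = top β * dotp e w + β * dotp f w := by
    intro β w
    rw [hZdef]
    exact aux_dotp_comb _ _ _ _ _
  have hprZ : ∀ β : ℝ, pr (Z β) = β := by
    intro β
    rw [hprdef]
    show dotp (Z β) f = β
    rw [hdotZ, hef, hff]
    ring
  have hhtZ : ∀ β : ℝ, ht (Z β) = top β := by
    intro β
    rw [hhtdef]
    show dotp (Z β) e = top β
    rw [hdotZ, hee]
    have hfe : dotp f e = 0 := by rw [hedef, hfdef, aux_dvu]; simp
    rw [hfe]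
    ring
  have hcolcompact : ∀ β : ℝ, IsCompact (col β) := by
    intro β
    apply IsCompact.of_isClosed_subset hCcompact
    · have : col β = C ∩ pr ⁻¹' {β} := by
        rw [hcoldef]; ext w; simp [mem_preimage]
      rw [this]
      exact hCclosed.inter (isClosed_singleton.preimage hprcont)
    · rw [hcoldef]
      intro w hw
      exact hw.1
  have hZC : ∀ β ∈ D, Z β ∈ C ∧ ∀ w ∈ col β, ht w ≤ top β := by
    intro β hβ
    rw [hDdef] at hβ
    obtain ⟨z, hzC, hzpr⟩ := hβ
    have hcolne : (col β).Nonempty := ⟨z, by rw [hcoldef]; exact ⟨hzC, hzpr⟩⟩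
    obtain ⟨w, hwcol, hwmax⟩ := (hcolcompact β).exists_isMaxOn hcolne hhtcont.continuousOn
    have htopeq : top β = ht w := by
      rw [htopdef]
      apply IsGreatest.csSup_eq
      constructor
      · exact ⟨w, hwcol, rfl⟩
      · rintro _ ⟨y, hy, rfl⟩
        exact hwmax hy
    have hwcol' : w ∈ C ∧ pr w = β := by rw [hcoldef] at hwcol; exact hwcol
    have hZeq : Z β = w := by
      rw [hZdef]
      show top β • e + β • f = w
      rw [htopeq, ← hwcol'.2]
      have hw1 : ht w = dotp w (uvec sb) := by rw [hhtdef, hedef]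
      have hw2 : pr w = dotp w (vvec sb) := by rw [hprdef, hfdef]
      rw [hw1, hw2, hedef, hfdef]
      exact aux_decomp sb w
    constructor
    · rw [hZeq]; exact hwcol'.1
    · intro y hy
      rw [htopeq]
      exact hwmax hy
  have hDconv : Convex ℝ D := by
    rw [hDdef]
    rintro _ ⟨x, hx, rfl⟩ _ ⟨y, hy, rfl⟩ a b ha hb hab
    refine ⟨a • x + b • y, hCconv hx hy ha hb hab, ?_⟩
    rw [hprdef]
    exact aux_dotp_comb a b x y f
  have hDcompact : IsCompact D := by
    rw [hDdef]
    exact hCcompact.image hprcont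
  have hDne : D.Nonempty := by
    obtain ⟨q, hq⟩ := hne
    exact ⟨pr q, by rw [hDdef]; exact ⟨q, hSC hq, rfl⟩⟩
  -- concavity of top
  have hconc : ∀ β₁ ∈ D, ∀ β₂ ∈ D, ∀ a b : ℝ, 0 ≤ a → 0 ≤ b → a + b = 1 →
      a * top β₁ + b * top β₂ ≤ top (a * β₁ + b * β₂) := by
    intro β₁ h1 β₂ h2 a b ha hb hab
    obtain ⟨hZ1, _⟩ := hZC β₁ h1
    obtain ⟨hZ2, _⟩ := hZC β₂ h2
    have hPC : a • Z β₁ + b • Z β₂ ∈ C := hCconv hZ1 hZ2 ha hb hab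
    have k1 : dotp (Z β₁) f = β₁ := by simpa [hprdef] using hprZ β₁
    have k2 : dotp (Z β₂) f = β₂ := by simpa [hprdef] using hprZ β₂
    have k3 : dotp (Z β₁) e = top β₁ := by simpa [hhtdef] using hhtZ β₁
    have k4 : dotp (Z β₂) e = top β₂ := by simpa [hhtdef] using hhtZ β₂
    have hPpr : pr (a • Z β₁ + b • Z β₂) = a * β₁ + b * β₂ := by
      rw [hprdef]
      show dotp _ f = _
      rw [aux_dotp_comb, k1, k2]
    have hPht : ht (a • Z β₁ + b • Z β₂) = a * top β₁ + b * top β₂ := by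
      rw [hhtdef]
      show dotp _ e = _
      rw [aux_dotp_comb, k3, k4]
    have hbdd : BddAbove (ht '' col (a * β₁ + b * β₂)) :=
      ((hcolcompact _).image hhtcont).bddAbove
    have htc : top (a * β₁ + b * β₂) = sSup (ht '' col (a * β₁ + b * β₂)) := by rw [htopdef]
    rw [htc, ← hPht]
    apply le_csSup hbdd
    exact ⟨_, by rw [hcoldef]; exact ⟨hPC, hPpr⟩, rfl⟩
  -- continuity of top on D
  have htopcont : ContinuousOn top D := by
    have husc : ∀ c : ℝ, IsClosed {β | β ∈ D ∧ c ≤ top β} := by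
      intro c
      have hEq : {β | β ∈ D ∧ c ≤ top β} = pr '' (C ∩ ht ⁻¹' Ici c) := by
        ext β
        constructor
        · rintro ⟨hβD, hβc⟩
          refine ⟨Z β, ⟨(hZC β hβD).1, ?_⟩, hprZ β⟩
          rw [mem_preimage, mem_Ici, hhtZ]
          exact hβc
        · rintro ⟨w, ⟨hwC, hwc⟩, rfl⟩
          rw [mem_preimage, mem_Ici] at hwc
          have hwD : pr w ∈ D := by rw [hDdef]; exact ⟨w, hwC, rfl⟩
          refine ⟨hwD, ?_⟩
          exact le_trans hwc ((hZC _ hwD).2 w (by rw [hcoldef]; exact ⟨hwC, rfl⟩))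
      rw [hEq]
      exact ((hCcompact.inter_right (isClosed_Ici.preimage hhtcont)).image hprcont).isClosed
    have hsupD : sSup D ∈ D := hDcompact.sSup_mem hDne
    have hinfD : sInf D ∈ D := hDcompact.sInf_mem hDne
    have hleS : ∀ β ∈ D, β ≤ sSup D := fun β hβ => le_csSup hDcompact.bddAbove hβ
    have hgeI : ∀ β ∈ D, sInf D ≤ β := fun β hβ => csInf_le hDcompact.bddBelow hβ
    intro β₀ hβ₀
    have key : Filter.Tendsto top (nhdsWithin β₀ D) (nhds (top β₀)) := by
      rw [tendsto_order]
      constructor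
      · intro c hc
        have hright : ∃ δ, 0 < δ ∧ ∀ β ∈ D, β₀ ≤ β → β - β₀ < δ → c < top β := by
          rcases eq_or_lt_of_le (hleS β₀ hβ₀) with heq | hlt
          · refine ⟨1, one_pos, fun β hβ hge _ => ?_⟩
            have hle2 : β ≤ β₀ := by rw [heq]; exact hleS β hβ
            have hbe : β = β₀ := le_antisymm hle2 hge
            rwa [hbe]
          · rcases le_or_gt (top β₀ - top (sSup D)) 0 with hE | hE
            · refine ⟨sSup D - β₀, by linarith, fun β hβ hge hlt' => ?_⟩
              obtain ⟨a', b', ha', hb', hab', heq⟩ := aux_between hge (hleS β hβ)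
              have hcb := hconc β₀ hβ₀ (sSup D) hsupD a' b' ha' hb' hab'
              rw [heq] at hcb
              have hsum : a' * top β₀ + b' * top β₀ = top β₀ := by
                rw [← add_mul, hab', one_mul]
              have hk := mul_le_mul_of_nonneg_left
                (show top β₀ ≤ top (sSup D) by linarith) hb'
              linarith
            · refine ⟨(sSup D - β₀) * (top β₀ - c) / (top β₀ - top (sSup D)),
                div_pos (mul_pos (by linarith) (by linarith)) hE, fun β hβ hge hlt' => ?_⟩
              obtain ⟨a', b', ha', hb', hab', heq⟩ := aux_between hge (hleS β hβ)
              have hcb := hconc β₀ hβ₀ (sSup D) hsupD a' b' ha' hb' hab'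
              rw [heq] at hcb
              have hb'eq : β - β₀ = b' * (sSup D - β₀) := by
                linear_combination -heq + β₀ * hab'
              have h1 : b' * (sSup D - β₀)
                  < (sSup D - β₀) * (top β₀ - c) / (top β₀ - top (sSup D)) := by
                rw [← hb'eq]; exact hlt'
              have h2 : b' * (sSup D - β₀) * (top β₀ - top (sSup D))
                  < (sSup D - β₀) * (top β₀ - c) := (lt_div_iff₀ hE).1 h1
              have h3 : b' * (top β₀ - top (sSup D)) < top β₀ - c := by
                nlinarith [h2, hlt]
              have hsum : a' * top β₀ + b' * top β₀ = top β₀ := by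
                rw [← add_mul, hab', one_mul]
              nlinarith [hcb, h3, hsum]
        have hleft : ∃ δ, 0 < δ ∧ ∀ β ∈ D, β ≤ β₀ → β₀ - β < δ → c < top β := by
          rcases eq_or_lt_of_le (hgeI β₀ hβ₀) with heq | hlt
          · refine ⟨1, one_pos, fun β hβ hge _ => ?_⟩
            have hle2 : β₀ ≤ β := by rw [← heq]; exact hgeI β hβ
            have hbe : β = β₀ := le_antisymm hge hle2
            rwa [hbe]
          · rcases le_or_gt (top β₀ - top (sInf D)) 0 with hE | hE
            · refine ⟨β₀ - sInf D, by linarith, fun β hβ hge hlt' => ?_⟩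
              obtain ⟨a', b', ha', hb', hab', heq⟩ := aux_between (hgeI β hβ) hge
              have hcb := hconc (sInf D) hinfD β₀ hβ₀ a' b' ha' hb' hab'
              rw [heq] at hcb
              have hsum : a' * top β₀ + b' * top β₀ = top β₀ := by
                rw [← add_mul, hab', one_mul]
              have hk := mul_le_mul_of_nonneg_left
                (show top β₀ ≤ top (sInf D) by linarith) ha'
              linarith
            · refine ⟨(β₀ - sInf D) * (top β₀ - c) / (top β₀ - top (sInf D)),
                div_pos (mul_pos (by linarith) (by linarith)) hE, fun β hβ hge hlt' => ?_⟩
              obtain ⟨a', b', ha', hb', hab', heq⟩ := aux_between (hgeI β hβ) hge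
              have hcb := hconc (sInf D) hinfD β₀ hβ₀ a' b' ha' hb' hab'
              rw [heq] at hcb
              have hb'eq : β₀ - β = a' * (β₀ - sInf D) := by
                linear_combination heq - β₀ * hab'
              have h1 : a' * (β₀ - sInf D)
                  < (β₀ - sInf D) * (top β₀ - c) / (top β₀ - top (sInf D)) := by
                rw [← hb'eq]; exact hlt'
              have h2 : a' * (β₀ - sInf D) * (top β₀ - top (sInf D))
                  < (β₀ - sInf D) * (top β₀ - c) := (lt_div_iff₀ hE).1 h1
              have h3 : a' * (top β₀ - top (sInf D)) < top β₀ - c := by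
                nlinarith [h2, hlt]
              have hsum : a' * top β₀ + b' * top β₀ = top β₀ := by
                rw [← add_mul, hab', one_mul]
              nlinarith [hcb, h3, hsum]
        obtain ⟨δ₁, hδ₁, H1⟩ := hright
        obtain ⟨δ₂, hδ₂, H2⟩ := hleft
        have hball : ∀ᶠ β in nhds β₀, |β - β₀| < min δ₁ δ₂ := by
          filter_upwards [Metric.ball_mem_nhds β₀ (lt_min hδ₁ hδ₂)] with β hβ
          rwa [Metric.mem_ball, Real.dist_eq] at hβ
        filter_upwards [self_mem_nhdsWithin,
          eventually_nhdsWithin_of_eventually_nhds hball] with β hβD hβball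
        have habs := abs_lt.1 hβball
        rcases le_total β₀ β with hcase | hcase
        · exact H1 β hβD hcase (by linarith [min_le_left δ₁ δ₂, habs.2])
        · exact H2 β hβD hcase (by linarith [min_le_right δ₁ δ₂, habs.1])
      · intro c hc
        have hnot : β₀ ∉ {β | β ∈ D ∧ c ≤ top β} := fun hmem => absurd hmem.2 (not_le.2 hc)
        have hopen : {β | β ∈ D ∧ c ≤ top β}ᶜ ∈ nhds β₀ := (husc c).isOpen_compl.mem_nhds hnot
        have hev : ∀ᶠ β in nhds β₀, β ∉ {β | β ∈ D ∧ c ≤ top β} := hopen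
        filter_upwards [self_mem_nhdsWithin,
          eventually_nhdsWithin_of_eventually_nhds hev] with β hβD hβnot
        by_contra hcon
        push_neg at hcon
        exact hβnot ⟨hβD, hcon⟩
    exact key
  -- balanced points
  have hbal : ∀ t ∈ Icc (0:ℝ) ω, ∃ q ∈ S,
      suppFn S t - 1 ≤ dotp q (uvec t) ∧ suppFn S (t + π/2) - 1 ≤ dotp q (vvec t) := by
    intro t htmem
    set F1 : Set Pt := {p | suppFn S t - 1 ≤ dotp p (uvec t)} with hF1
    set F2 : Set Pt := {p | suppFn S (t + π/2) - 1 ≤ dotp p (vvec t)} with hF2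
    have hcl1 : IsClosed F1 := by
      have : F1 = (fun p => dotp p (uvec t)) ⁻¹' (Ici (suppFn S t - 1)) := rfl
      rw [this]; exact isClosed_Ici.preimage (aux_cont _)
    have hcl2 : IsClosed F2 := by
      have : F2 = (fun p => dotp p (vvec t)) ⁻¹' (Ici (suppFn S (t + π/2) - 1)) := rfl
      rw [this]; exact isClosed_Ici.preimage (aux_cont _)
    have hcover : S ⊆ F1 ∪ F2 := by
      intro q hq
      have h3 := (hhall t htmem hq).2
      rw [Qminus, mem_setOf_eq, not_and, not_lt] at h3
      rcases lt_or_ge (dotp q (uvec t)) (suppFn S t - 1) with hc | hc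
      · right
        have := h3 hc
        rwa [aux_uvec_pi2] at this
      · left; exact hc
    have hne1 : (S ∩ F1).Nonempty := by
      have hlt : suppFn S t - 1 < sSup ((fun p => dotp p (uvec t)) '' S) := by
        have : sSup ((fun p => dotp p (uvec t)) '' S) = suppFn S t := rfl
        rw [this]; linarith
      obtain ⟨x, hx, hxlt⟩ := exists_lt_of_lt_csSup (hImgNe (uvec t)) hlt
      obtain ⟨q, hq, rfl⟩ := hx
      exact ⟨q, hq, le_of_lt hxlt⟩
    have hne2 : (S ∩ F2).Nonempty := by
      have hlt : suppFn S (t + π/2) - 1 < sSup ((fun p => dotp p (uvec (t + π/2))) '' S) := by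
        have : sSup ((fun p => dotp p (uvec (t + π/2))) '' S) = suppFn S (t + π/2) := rfl
        rw [this]; linarith
      obtain ⟨x, hx, hxlt⟩ := exists_lt_of_lt_csSup (hImgNe (uvec (t + π/2))) hlt
      obtain ⟨q, hq, rfl⟩ := hx
      refine ⟨q, hq, ?_⟩
      show suppFn S (t + π/2) - 1 ≤ dotp q (vvec t)
      rw [← aux_uvec_pi2]
      exact le_of_lt hxlt
    obtain ⟨q, hqS, hq12⟩ :=
      isPreconnected_closed_iff.mp hconn.isPreconnected F1 F2 hcl1 hcl2 hcover hne1 hne2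
    exact ⟨q, hqS, hq12.1, hq12.2⟩
  -- the good set of columns
  obtain ⟨J, hJdef⟩ : ∃ J : Set ℝ,
      J = {β | β ∈ D ∧ ∀ t ∈ Icc (0:ℝ) ω, Z β ∉ Qminus S t} := ⟨_, rfl⟩
  have hJconv : Convex ℝ J := by
    rw [hJdef]
    intro β₁ hβ₁ β₂ hβ₂ a b ha hb hab
    obtain ⟨hD1, hQ1⟩ := hβ₁
    obtain ⟨hD2, hQ2⟩ := hβ₂
    simp only [smul_eq_mul, mem_setOf_eq]
    refine ⟨by simpa using hDconv hD1 hD2 ha hb hab, ?_⟩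
    intro t htmem
    have hformU : ∀ β : ℝ, dotp (Z β) (uvec t)
        = top β * Real.cos (sb - t) + β * Real.sin (t - sb) := by
      intro β
      rw [hexpU (Z β) t, hhtZ, hprZ]
    have hformV : ∀ β : ℝ, dotp (Z β) (vvec t)
        = top β * Real.sin (sb - t) + β * Real.cos (sb - t) := by
      intro β
      rw [hexpV (Z β) t, hhtZ, hprZ]
    have hcos := hcosnn t htmem
    have hsin := hsinnn t htmem
    have hgA : ∀ x ∈ D, ∀ y ∈ D, ∀ a' b' : ℝ, 0 ≤ a' → 0 ≤ b' → a' + b' = 1 →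
        suppFn S t - 1 ≤ dotp (Z x) (uvec t) → suppFn S t - 1 ≤ dotp (Z y) (uvec t) →
        suppFn S t - 1 ≤ dotp (Z (a' * x + b' * y)) (uvec t) := by
      intro x hx y hy a' b' ha' hb' hab' hAx hAy
      have hc2 := mul_le_mul_of_nonneg_right (hconc x hx y hy a' b' ha' hb' hab') hcos
      rw [hformU] at hAx hAy ⊢
      have k1 := mul_le_mul_of_nonneg_left hAx ha'
      have k2 := mul_le_mul_of_nonneg_left hAy hb'
      have hsum : a' * (suppFn S t - 1) + b' * (suppFn S t - 1) = suppFn S t - 1 := by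
        rw [← add_mul, hab', one_mul]
      nlinarith [hc2, k1, k2, hsum]
    have hgB : ∀ x ∈ D, ∀ y ∈ D, ∀ a' b' : ℝ, 0 ≤ a' → 0 ≤ b' → a' + b' = 1 →
        suppFn S (t + π/2) - 1 ≤ dotp (Z x) (vvec t) →
        suppFn S (t + π/2) - 1 ≤ dotp (Z y) (vvec t) →
        suppFn S (t + π/2) - 1 ≤ dotp (Z (a' * x + b' * y)) (vvec t) := by
      intro x hx y hy a' b' ha' hb' hab' hAx hAy
      have hc2 := mul_le_mul_of_nonneg_right (hconc x hx y hy a' b' ha' hb' hab') hsin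
      rw [hformV] at hAx hAy ⊢
      have k1 := mul_le_mul_of_nonneg_left hAx ha'
      have k2 := mul_le_mul_of_nonneg_left hAy hb'
      have hsum : a' * (suppFn S (t + π/2) - 1) + b' * (suppFn S (t + π/2) - 1)
          = suppFn S (t + π/2) - 1 := by
        rw [← add_mul, hab', one_mul]
      nlinarith [hc2, k1, k2, hsum]
    have hnotQ : ∀ β : ℝ, (suppFn S t - 1 ≤ dotp (Z β) (uvec t)
        ∨ suppFn S (t + π/2) - 1 ≤ dotp (Z β) (vvec t)) → Z β ∉ Qminus S t := by
      intro β hor hmem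
      rw [Qminus, mem_setOf_eq, aux_uvec_pi2] at hmem
      rcases hor with hh | hh
      · exact absurd hmem.1 (not_lt.2 hh)
      · exact absurd hmem.2 (not_lt.2 hh)
    have hQ' : ∀ β : ℝ, Z β ∉ Qminus S t → (suppFn S t - 1 ≤ dotp (Z β) (uvec t)
        ∨ suppFn S (t + π/2) - 1 ≤ dotp (Z β) (vvec t)) := by
      intro β hβ
      by_contra hcon
      push_neg at hcon
      exact hβ (by
        rw [Qminus, mem_setOf_eq, aux_uvec_pi2]
        exact hcon)
    obtain ⟨q, hqS, hqA, hqB⟩ := hbal t htmem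
    have hβqD : pr q ∈ D := by rw [hDdef]; exact ⟨q, hSC hqS, rfl⟩
    have htopq : ht q ≤ top (pr q) :=
      (hZC (pr q) hβqD).2 q (by rw [hcoldef]; exact ⟨hSC hqS, rfl⟩)
    have hZqA : suppFn S t - 1 ≤ dotp (Z (pr q)) (uvec t) := by
      rw [hformU]
      rw [hexpU q t] at hqA
      have := mul_le_mul_of_nonneg_right htopq hcos
      linarith
    have hZqB : suppFn S (t + π/2) - 1 ≤ dotp (Z (pr q)) (vvec t) := by
      rw [hformV]
      rw [hexpV q t] at hqB
      have := mul_le_mul_of_nonneg_right htopq hsin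
      linarith
    have hor1 := hQ' β₁ (hQ1 t htmem)
    have hor2 := hQ' β₂ (hQ2 t htmem)
    apply hnotQ
    have hlow : β₁ ≤ a * β₁ + b * β₂ ∨ β₂ ≤ a * β₁ + b * β₂ := by
      rcases le_total β₁ β₂ with hle | hle
      · left
        calc β₁ = a * β₁ + b * β₁ := by rw [← add_mul, hab, one_mul]
        _ ≤ a * β₁ + b * β₂ := by
            have := mul_le_mul_of_nonneg_left hle hb; linarith
      · right
        calc β₂ = a * β₂ + b * β₂ := by rw [← add_mul, hab, one_mul]
        _ ≤ a * β₁ + b * β₂ := by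
            have := mul_le_mul_of_nonneg_left hle ha; linarith
    have hhigh : a * β₁ + b * β₂ ≤ β₁ ∨ a * β₁ + b * β₂ ≤ β₂ := by
      rcases le_total β₁ β₂ with hle | hle
      · right
        calc a * β₁ + b * β₂ ≤ a * β₂ + b * β₂ := by
              have := mul_le_mul_of_nonneg_left hle ha; linarith
        _ = β₂ := by rw [← add_mul, hab, one_mul]
      · left
        calc a * β₁ + b * β₂ ≤ a * β₁ + b * β₁ := by
              have := mul_le_mul_of_nonneg_left hle hb; linarith
        _ = β₁ := by rw [← add_mul, hab, one_mul]
    rcases le_total (a * β₁ + b * β₂) (pr q) with hcq | hcq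
    · rcases hlow with hx | hx
      · obtain ⟨a', b', ha', hb', hab', heq⟩ := aux_between hx hcq
        rcases hor1 with hA | hB
        · left; rw [← heq]; exact hgA β₁ hD1 (pr q) hβqD a' b' ha' hb' hab' hA hZqA
        · right; rw [← heq]; exact hgB β₁ hD1 (pr q) hβqD a' b' ha' hb' hab' hB hZqB
      · obtain ⟨a', b', ha', hb', hab', heq⟩ := aux_between hx hcq
        rcases hor2 with hA | hB
        · left; rw [← heq]; exact hgA β₂ hD2 (pr q) hβqD a' b' ha' hb' hab' hA hZqA
        · right; rw [← heq]; exact hgB β₂ hD2 (pr q) hβqD a' b' ha' hb' hab' hB hZqB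
    · rcases hhigh with hx | hx
      · obtain ⟨a', b', ha', hb', hab', heq⟩ := aux_between hcq hx
        rcases hor1 with hA | hB
        · left; rw [← heq]; exact hgA (pr q) hβqD β₁ hD1 a' b' ha' hb' hab' hZqA hA
        · right; rw [← heq]; exact hgB (pr q) hβqD β₁ hD1 a' b' ha' hb' hab' hZqB hB
      · obtain ⟨a', b', ha', hb', hab', heq⟩ := aux_between hcq hx
        rcases hor2 with hA | hB
        · left; rw [← heq]; exact hgA (pr q) hβqD β₂ hD2 a' b' ha' hb' hab' hZqA hA
        · right; rw [← heq]; exact hgB (pr q) hβqD β₂ hD2 a' b' ha' hb' hab' hZqB hB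
  -- the top arc
  obtain ⟨T, hTdef⟩ : ∃ T : Set Pt, T = Z '' J := ⟨_, rfl⟩
  have hTG : T ⊆ G := by
    rw [hTdef, hGdef]
    rintro _ ⟨β, hβJ, rfl⟩
    rw [hJdef] at hβJ
    refine ⟨(hZC β hβJ.1).1, ?_⟩
    rw [mem_iInter₂]
    intro t htmem
    exact hβJ.2 t htmem
  have hTpre : IsPreconnected T := by
    rw [hTdef]
    apply IsPreconnected.image (hJconv.isPreconnected) Z
    have hJD : J ⊆ D := by rw [hJdef]; intro β hβ; exact hβ.1
    rw [hZdef]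
    exact ((htopcont.mono hJD).smul continuousOn_const).add (continuousOn_id.smul continuousOn_const)
  -- every z in G: the top of its column is in T, and the segment up to it is in G
  have hup : ∀ z ∈ G, Z (pr z) ∈ T ∧ segment ℝ z (Z (pr z)) ⊆ G := by
    intro z hz
    rw [hGdef] at hz
    obtain ⟨hzC, hzout⟩ := hz
    rw [mem_iInter₂] at hzout
    have hβD : pr z ∈ D := by rw [hDdef]; exact ⟨z, hzC, rfl⟩
    obtain ⟨hZβC, hmax⟩ := hZC (pr z) hβD
    have hzcol : z ∈ col (pr z) := by rw [hcoldef]; exact ⟨hzC, rfl⟩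
    have hhtle : ht z ≤ ht (Z (pr z)) := by
      rw [hhtZ]
      exact hmax z hzcol
    have hpreq : pr (Z (pr z)) = pr z := hprZ (pr z)
    have hZout : ∀ t ∈ Icc (0:ℝ) ω, Z (pr z) ∉ Qminus S t := by
      intro t htmem
      have := hmono z (Z (pr z)) hpreq hhtle t htmem (hzout t htmem) 0 1
        (le_refl 0) zero_le_one (by norm_num)
      simpa using this
    have hβJ : pr z ∈ J := by rw [hJdef]; exact ⟨hβD, hZout⟩
    constructor
    · rw [hTdef]; exact ⟨pr z, hβJ, rfl⟩
    · rintro p ⟨a, b, ha, hb, hab, rfl⟩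
      rw [hGdef]
      refine ⟨hCconv hzC hZβC ha hb hab, ?_⟩
      rw [mem_iInter₂]
      intro t htmem
      exact hmono z (Z (pr z)) hpreq hhtle t htmem (hzout t htmem) a b ha hb hab
  -- conclude
  obtain ⟨z₀, hz₀⟩ := hne
  have hz₀G : z₀ ∈ G := hSG hz₀
  have hw₀ : Z (pr z₀) ∈ T := (hup z₀ hz₀G).1
  rw [hGoalEq]
  constructor
  · exact ⟨z₀, hz₀G⟩
  · have hGun : G = ⋃₀ ((fun z => segment ℝ z (Z (pr z)) ∪ T) '' G) := by
      apply Subset.antisymm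
      · intro z hz
        exact ⟨_, ⟨z, hz, rfl⟩, Or.inl (left_mem_segment ℝ z _)⟩
      · intro z hz
        obtain ⟨_, ⟨w, hw, rfl⟩, hzmem⟩ := hz
        rcases hzmem with hseg | hT
        · exact (hup w hw).2 hseg
        · exact hTG hT
    rw [hGun]
    apply isPreconnected_sUnion (Z (pr z₀))
    · rintro s ⟨w, hw, rfl⟩
      exact Or.inr hw₀
    · rintro s ⟨w, hw, rfl⟩
      apply IsPreconnected.union (Z (pr w))
      · exact right_mem_segment ℝ w _
      · exact (hup w hw).1
      · exact (convex_segment w _).isPreconnected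
      · exact hTpre
end
end
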